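/- arXiv:1702.02650 — 9 statements merged into one kernel-verified Lean document; each statement's English description precedes it below -/
import Mathlib

section
/- Let n ≥ 1 and let A be the n×n real matrix with diagonal entries a_1, …, a_n, with entries A[i, i+1] = 1 for i = 1, …, n−1, with last-row entries A[n, j] = b_{n+1−j} for j = 1, …, n−1, and all other entries zero. Then the characteristic polynomial of A equals ∏_{i=1}^{n}(x − a_i) − ∑_{j=2}^{n} b_j · ∏_{i=1}^{n−j}(x − a_i). -/
open Polynomial

/-!
For `n ≥ 2`, expand `det (X - A)` along the first column: its only nonzero entries are `X - a₁` on
top and `-bₙ` at the bottom. The top minor is the characteristic matrix of the matrix of the same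
shape built from `a₂, …, aₙ`; the bottom minor is lower triangular with `-1` on its diagonal.
Hence `χₙ(a₁, …, aₙ) = (X - a₁) χₙ₋₁(a₂, …, aₙ) - bₙ`, a recurrence that the right-hand side
satisfies as well.
-/

/-- The `n × n` matrix (indices `0, …, n-1` corresponding to `1, …, n`) with diagonal
`a 0, …, a (n-1)`, superdiagonal entries `1`, last row below the diagonal
`b n, b (n-1), …, b 2`, and zeros elsewhere. -/
def companionPlusDiag (n : ℕ) (a b : ℕ → ℝ) : Matrix (Fin n) (Fin n) ℝ :=
  fun i j =>
    if (i : ℕ) = (j : ℕ) then a (i : ℕ)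
    else if (i : ℕ) + 1 = (j : ℕ) then 1
    else if (i : ℕ) = n - 1 then b (n - (j : ℕ))
    else 0

theorem Matrix.charmatrix_submatrix {R m n : Type*} [CommRing R] [DecidableEq m] [DecidableEq n]
    [Fintype m] [Fintype n] (M : Matrix n n R) {e : m → n} (he : Function.Injective e) :
    (M.submatrix e e).charmatrix = M.charmatrix.submatrix e e := by
  ext i j : 1
  by_cases h : i = j
  · subst h; simp
  · simp [h, he.ne h]

theorem Finset.prod_range_sub_sum_Icc_two_succ_succ {S : Type*} [CommRing S] (p c : ℕ → S)
    (n : ℕ) :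
    ∏ i ∈ range (n + 2), p i - ∑ j ∈ Icc 2 (n + 2), c j * ∏ i ∈ range (n + 2 - j), p i =
      p 0 * (∏ i ∈ range (n + 1), p (i + 1) -
        ∑ j ∈ Icc 2 (n + 1), c j * ∏ i ∈ range (n + 1 - j), p (i + 1)) - c (n + 2) := by
  have hterm : ∀ j ∈ Icc 2 (n + 1),
      c j * ∏ i ∈ range (n + 2 - j), p i =
        p 0 * (c j * ∏ i ∈ range (n + 1 - j), p (i + 1)) := by
    intro j hj
    rw [show n + 2 - j = n + 1 - j + 1 by grind, prod_range_succ']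
    ring
  rw [sum_Icc_succ_top (by omega), sum_congr rfl hterm, ← mul_sum, prod_range_succ', Nat.sub_self,
    range_zero, prod_empty]
  ring

namespace companionPlusDiag

variable (n : ℕ) (a b : ℕ → ℝ)

theorem submatrix_succ :
    (companionPlusDiag (n + 1) a b).submatrix Fin.succ Fin.succ =
      companionPlusDiag n (fun k => a (k + 1)) b := by
  ext i j
  simp only [Matrix.submatrix_apply, companionPlusDiag, Fin.val_succ]
  split_ifs <;> grind

theorem apply_zero_zero : companionPlusDiag (n + 1) a b 0 0 = a 0 := by
  simp [companionPlusDiag]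

theorem apply_last_zero : companionPlusDiag (n + 2) a b (Fin.last (n + 1)) 0 = b (n + 2) := by
  simp [companionPlusDiag]

theorem det_charmatrix_submatrix_castSucc_succ :
    ((companionPlusDiag (n + 1) a b).charmatrix.submatrix Fin.castSucc Fin.succ).det =
      (-1) ^ n := by
  have hne (i j : Fin n) (hij : i ≤ j) : i.castSucc ≠ j.succ := by
    simp [Fin.ext_iff]; omega
  rw [Matrix.det_of_isLowerTriangular]
  · have hdiag (i : Fin n) :
        (companionPlusDiag (n + 1) a b).charmatrix i.castSucc i.succ = -1 := by
      simp [Matrix.charmatrix_apply_ne _ _ _ (hne i i le_rfl), companionPlusDiag]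
    simp [hdiag]
  · intro i j hij
    have hzero : companionPlusDiag (n + 1) a b i.castSucc j.succ = 0 := by
      have : (i : ℕ) < j := hij
      simp only [companionPlusDiag, Fin.val_castSucc, Fin.val_succ]
      grind
    simp [Matrix.charmatrix_apply_ne _ _ _ (hne i j hij.le), hzero]

theorem charpoly_succ_succ :
    (companionPlusDiag (n + 2) a b).charpoly =
      (X - C (a 0)) * (companionPlusDiag (n + 1) (fun k => a (k + 1)) b).charpoly -
        C (b (n + 2)) := by
  have hcol (i : Fin (n + 2)) (h0 : i ≠ 0) (hlast : i ≠ Fin.last (n + 1)) :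
      (companionPlusDiag (n + 2) a b).charmatrix i 0 = 0 := by
    have hentry : companionPlusDiag (n + 2) a b i 0 = 0 := by
      simp only [companionPlusDiag, Fin.val_zero]
      rw [Ne, Fin.ext_iff, Fin.val_zero] at h0
      rw [Ne, Fin.ext_iff, Fin.val_last] at hlast
      grind
    simp [Matrix.charmatrix_apply_ne _ _ _ h0, hentry]
  rw [Matrix.charpoly, Matrix.det_succ_column_zero,
    Finset.sum_eq_add 0 (Fin.last (n + 1)) Fin.last_pos.ne
      (fun i _ hi => by simp [hcol i hi.1 hi.2]) (by simp) (by simp),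
    Fin.succAbove_zero, ← Matrix.charmatrix_submatrix _ (Fin.succ_injective _), submatrix_succ,
    Fin.succAbove_last, det_charmatrix_submatrix_castSucc_succ]
  simp only [Matrix.charmatrix_apply_eq, Matrix.charmatrix_apply_ne _ _ _ Fin.last_pos.ne',
    Matrix.charpoly, apply_zero_zero, apply_last_zero, Fin.val_zero, Fin.val_last, pow_zero,
    one_mul]
  rw [mul_right_comm, ← mul_pow, neg_one_mul, neg_neg, one_pow, one_mul]
  exact (sub_eq_add_neg _ _).symm

end companionPlusDiag

theorem charpoly_companionPlusDiag_general (n : ℕ) (a b : ℕ → ℝ) :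
    (companionPlusDiag n a b).charpoly =
      ∏ i ∈ Finset.range n, (X - C (a i)) -
        ∑ j ∈ Finset.Icc 2 n, C (b j) * ∏ i ∈ Finset.range (n - j), (X - C (a i)) := by
  induction n generalizing a with
  | zero => simp [Matrix.charpoly]
  | succ n ih =>
    rcases n with _ | n
    · simp [Matrix.charpoly, companionPlusDiag]
    · rw [companionPlusDiag.charpoly_succ_succ, ih, Finset.prod_range_sub_sum_Icc_two_succ_succ]

/-- The characteristic polynomial of the companion-plus-diagonal matrix
equals `∏_{i=1}^n (x - a_i) - ∑_{j=2}^n b_j ∏_{i=1}^{n-j} (x - a_i)`. -/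
theorem charpoly_companionPlusDiag (n : ℕ) (hn : 1 ≤ n) (a b : ℕ → ℝ) :
    (companionPlusDiag n a b).charpoly =
      ∏ i ∈ Finset.range n, (X - C (a i)) -
        ∑ j ∈ Finset.Icc 2 n, C (b j) * ∏ i ∈ Finset.range (n - j), (X - C (a i)) :=
  charpoly_companionPlusDiag_general n a b
end

section
/- Let n ≥ 2 and let A be the n×n real matrix with diagonal entries a_1, …, a_n, superdiagonal entries equal to 1, last row (b_n, b_{n−1}, …, b_2, a_n), and all other entries zero. Suppose the characteristic polynomial of A, mapped to ℂ, equals ∏_{i=1}^{n}(X − λ_i) for complex numbers λ_1, …, λ_n. Then b_2 = ( (λ_1² + ⋯ + λ_n²) − (a_1² + ⋯ + a_n²) ) / 2. -/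
open Polynomial Finset

lemma aux_sq_sum {R : Type*} [CommRing R] (g : ℕ → R) (n : ℕ) :
    (∑ i ∈ Finset.range n, g i) ^ 2 =
      (∑ i ∈ Finset.range n, g i ^ 2) +
        2 * ∑ i ∈ Finset.range n, ∑ j ∈ Finset.range i, g i * g j := by
  induction n with
  | zero => simp
  | succ n ih =>
    simp only [Finset.sum_range_succ]
    rw [add_sq, ih, ← Finset.mul_sum]
    ring

lemma aux_coeffs {R : Type*} [CommRing R] [Nontrivial R] (f : ℕ → R) (m : ℕ) :
    (∏ i ∈ Finset.range (m+2), (X - C (f i))).coeff (m+1) = -∑ i ∈ Finset.range (m+2), f i ∧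
    (∏ i ∈ Finset.range (m+2), (X - C (f i))).coeff m =
      ∑ i ∈ Finset.range (m+2), ∑ j ∈ Finset.range i, f i * f j := by
  induction m with
  | zero =>
    have h0 : ∏ i ∈ Finset.range 2, (X - C (f i)) =
        X^2 - C (f 0 + f 1) * X + C (f 0 * f 1) := by
      rw [Finset.prod_range_succ, Finset.prod_range_one]
      simp only [map_add, map_mul]
      ring
    rw [h0]
    constructor
    · simp [coeff_add, coeff_sub, coeff_C_mul, coeff_X, coeff_C, Finset.sum_range_succ]
    · simp [coeff_add, coeff_sub, coeff_C_mul, coeff_X, coeff_C, Finset.sum_range_succ,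
        mul_comm]
  | succ m ih =>
    have hmon : (∏ i ∈ Finset.range (m+2), (X - C (f i))).Monic :=
      monic_prod_of_monic _ _ fun i _ => monic_X_sub_C _
    have hdeg : (∏ i ∈ Finset.range (m+2), (X - C (f i))).natDegree = m + 2 := by
      have : ∀ i ∈ Finset.range (m+2), (X - C (f i)).natDegree = 1 := fun i _ => natDegree_X_sub_C _
      rw [natDegree_prod_of_monic _ _ fun i _ => monic_X_sub_C _, Finset.sum_congr rfl this]
      simp
    have htop : (∏ i ∈ Finset.range (m+2), (X - C (f i))).coeff (m+2) = 1 := by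
      have := hmon.coeff_natDegree
      rwa [hdeg] at this
    rw [Finset.prod_range_succ]
    constructor
    · rw [mul_sub, coeff_sub, show m+1+1 = (m+1)+1 from rfl, coeff_mul_X, coeff_mul_C, ih.1,
        htop, Finset.sum_range_succ f (m+2)]
      ring
    · rw [mul_sub, coeff_sub, coeff_mul_X, coeff_mul_C, ih.1, ih.2,
        Finset.sum_range_succ (fun i => ∑ j ∈ Finset.range i, f i * f j) (m+2),
        ← Finset.mul_sum]
      ring

open Polynomial Finset

lemma aux_charpoly_coeff (m : ℕ) (a b : ℕ → ℝ)
    (A : Matrix (Fin (m+2)) (Fin (m+2)) ℝ)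
    (hA : ∀ i j : Fin (m+2), A i j = if (i : ℕ) = (j : ℕ) then a (i : ℕ)
      else if (i : ℕ) + 1 = (j : ℕ) then 1
      else if (i : ℕ) = (m+2) - 1 then b ((m+2) - (j : ℕ))
      else 0) :
    A.charpoly.coeff m =
      (∑ i ∈ Finset.range (m+2), ∑ j ∈ Finset.range i, a i * a j) - b 2 := by
  classical
  set i0 : Fin (m+2) := ⟨m, by omega⟩ with hi0
  set i1 : Fin (m+2) := ⟨m+1, by omega⟩ with hi1
  have hne : i0 ≠ i1 := by simp [hi0, hi1, Fin.ext_iff]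
  set s : Equiv.Perm (Fin (m+2)) := Equiv.swap i0 i1 with hs
  have hs1 : (1 : Equiv.Perm (Fin (m+2))) ≠ s := by
    intro h
    have : (1 : Equiv.Perm (Fin (m+2))) i0 = s i0 := by rw [h]
    simp [hs, Equiv.swap_apply_left] at this
    exact hne this
  -- the diagonal entries
  have hdiag : ∀ i : Fin (m+2), A i i = a (i : ℕ) := by
    intro i; rw [hA]; simp
  -- claim: product term vanishes for swaps other than s
  have hswapzero : ∀ x y : Fin (m+2), (x : ℕ) < (y : ℕ) → Equiv.swap x y ≠ s →
      (∏ i, (Matrix.charmatrix A) ((Equiv.swap x y) i) i) = 0 := by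
    intro x y hxy hnots
    have hxyne : x ≠ y := fun h => by simp [h] at hxy
    by_cases hsup : (x : ℕ) + 1 = (y : ℕ)
    · -- then we must have y ≠ m+1, and the factor at x vanishes
      have hy : (y : ℕ) ≠ m + 1 := by
        intro hy1
        apply hnots
        have hx : x = i0 := by ext; simp only [hi0, Fin.val_mk]; omega
        have hy : y = i1 := by ext; simp only [hi1, Fin.val_mk]; omega
        rw [hx, hy]
      apply Finset.prod_eq_zero (Finset.mem_univ x)
      rw [Equiv.swap_apply_left, Matrix.charmatrix_apply_ne _ _ _ hxyne.symm, hA]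
      have h1 : ¬ ((y : ℕ) = (x : ℕ)) := by omega
      have h2 : ¬ ((y : ℕ) + 1 = (x : ℕ)) := by omega
      have h3 : ¬ ((y : ℕ) = (m+2) - 1) := by omega
      rw [if_neg h1, if_neg h2, if_neg h3, map_zero, neg_zero]
    · -- the factor at y vanishes
      apply Finset.prod_eq_zero (Finset.mem_univ y)
      rw [Equiv.swap_apply_right, Matrix.charmatrix_apply_ne _ _ _ hxyne, hA]
      have h1 : ¬ ((x : ℕ) = (y : ℕ)) := by omega
      have h3 : ¬ ((x : ℕ) = (m+2) - 1) := by
        have := y.isLt; omega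
      rw [if_neg h1, if_neg hsup, if_neg h3, map_zero, neg_zero]
  rw [Matrix.charpoly, Matrix.det_apply', Polynomial.finset_sum_coeff]
  rw [← Finset.sum_subset (Finset.subset_univ ({1, s} : Finset (Equiv.Perm (Fin (m+2)))))]
  · rw [Finset.sum_pair hs1]
    -- identity term
    have hid : ((((Equiv.Perm.sign (1 : Equiv.Perm (Fin (m+2)))) : ℤ) : ℝ[X]) *
        ∏ i, (Matrix.charmatrix A) ((1 : Equiv.Perm (Fin (m+2))) i) i).coeff m =
        ∑ i ∈ Finset.range (m+2), ∑ j ∈ Finset.range i, a i * a j := by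
      simp only [Equiv.Perm.sign_one, Units.val_one, Int.cast_one, one_mul,
        Equiv.Perm.one_apply, Matrix.charmatrix_apply_eq]
      have : ∀ i : Fin (m+2), (X : ℝ[X]) - C (A i i) = X - C (a (i : ℕ)) := by
        intro i; rw [hdiag]
      simp_rw [this]
      rw [Fin.prod_univ_eq_prod_range (fun i => (X : ℝ[X]) - C (a i)) (m+2)]
      exact (aux_coeffs a m).2
    have hsw : ((((Equiv.Perm.sign s) : ℤ) : ℝ[X]) *
        ∏ i, (Matrix.charmatrix A) (s i) i).coeff m = -(b 2) := by
      have hsign : Equiv.Perm.sign s = -1 := Equiv.Perm.sign_swap hne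
      rw [hsign]
      have hmem1 : i1 ∈ Finset.univ.erase i0 :=
        Finset.mem_erase.mpr ⟨Ne.symm hne, Finset.mem_univ _⟩
      set t : Finset (Fin (m+2)) := (Finset.univ.erase i0).erase i1 with ht
      have hprod : (∏ i, (Matrix.charmatrix A) (s i) i) =
          (Matrix.charmatrix A) (s i0) i0 *
            ((Matrix.charmatrix A) (s i1) i1 * ∏ i ∈ t, (Matrix.charmatrix A) (s i) i) := by
        have e1 := Finset.mul_prod_erase Finset.univ
          (fun i => (Matrix.charmatrix A) (s i) i) (Finset.mem_univ i0)
        have e2 := Finset.mul_prod_erase (Finset.univ.erase i0)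
          (fun i => (Matrix.charmatrix A) (s i) i) hmem1
        rw [ht, ← e1, ← e2]
      have hA10 : A i1 i0 = b 2 := by
        rw [hA]
        have h1 : ¬ ((i1 : ℕ) = (i0 : ℕ)) := by simp only [hi0, hi1, Fin.val_mk]; omega
        have h2 : ¬ ((i1 : ℕ) + 1 = (i0 : ℕ)) := by simp only [hi0, hi1, Fin.val_mk]; omega
        have h3 : (i1 : ℕ) = (m+2) - 1 := by simp only [hi1, Fin.val_mk]; omega
        rw [if_neg h1, if_neg h2, if_pos h3]
        have h4 : (i0 : ℕ) = m := by simp only [hi0, Fin.val_mk]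
        rw [h4]
        congr 1
        omega
      have hA01 : A i0 i1 = 1 := by
        rw [hA]
        have h1 : ¬ ((i0 : ℕ) = (i1 : ℕ)) := by simp only [hi0, hi1, Fin.val_mk]; omega
        have h2 : (i0 : ℕ) + 1 = (i1 : ℕ) := by simp only [hi0, hi1, Fin.val_mk]
        rw [if_neg h1, if_pos h2]
      have hf0 : (Matrix.charmatrix A) (s i0) i0 = -C (b 2) := by
        rw [hs, Equiv.swap_apply_left, Matrix.charmatrix_apply_ne _ _ _ hne.symm, hA10]
      have hf1 : (Matrix.charmatrix A) (s i1) i1 = -1 := by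
        rw [hs, Equiv.swap_apply_right, Matrix.charmatrix_apply_ne _ _ _ hne, hA01, map_one]
      have hrest : ∀ i ∈ t, (Matrix.charmatrix A) (s i) i = X - C (a (i : ℕ)) := by
        intro i hi
        rw [ht] at hi
        obtain ⟨hi1', hi0'⟩ := Finset.mem_erase.mp hi
        obtain ⟨hi0'', _⟩ := Finset.mem_erase.mp hi0'
        rw [hs, Equiv.swap_apply_of_ne_of_ne hi0'' hi1', Matrix.charmatrix_apply_eq, hdiag]
      have hcardt : t.card = m := by
        rw [ht, Finset.card_erase_of_mem hmem1, Finset.card_erase_of_mem (Finset.mem_univ i0),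
          Finset.card_univ, Fintype.card_fin]
        omega
      have hPmon : (∏ i ∈ t, ((X : ℝ[X]) - C (a (i : ℕ)))).Monic :=
        monic_prod_of_monic _ _ fun i _ => monic_X_sub_C _
      have hPdeg : (∏ i ∈ t, ((X : ℝ[X]) - C (a (i : ℕ)))).natDegree = m := by
        rw [natDegree_prod_of_monic _ _ fun i _ => monic_X_sub_C _]
        have : ∀ i ∈ t, ((X : ℝ[X]) - C (a (i : ℕ))).natDegree = 1 :=
          fun i _ => natDegree_X_sub_C _
        rw [Finset.sum_congr rfl this]
        simp [hcardt]
      have hPcoeff : (∏ i ∈ t, ((X : ℝ[X]) - C (a (i : ℕ)))).coeff m = 1 := by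
        have := hPmon.coeff_natDegree
        rwa [hPdeg] at this
      rw [hprod, hf0, hf1, Finset.prod_congr rfl hrest]
      have : ((((-1 : ℤˣ) : ℤ) : ℝ[X]) * (-C (b 2) * (-1 * ∏ i ∈ t, ((X : ℝ[X]) - C (a (i : ℕ)))))) =
          -(C (b 2) * ∏ i ∈ t, ((X : ℝ[X]) - C (a (i : ℕ)))) := by
        push_cast
        ring
      rw [this, coeff_neg, coeff_C_mul, hPcoeff, mul_one]
    rw [hid, hsw]
    ring
  · -- vanishing of the other terms
    intro σ _ hσ
    simp only [Finset.mem_insert, Finset.mem_singleton, not_or] at hσ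
    obtain ⟨hσ1, hσs⟩ := hσ
    rw [coeff_intCast_mul]
    have h2 : 2 ≤ σ.support.card := by
      rcases Nat.lt_or_ge σ.support.card 2 with h | h
      · exfalso
        interval_cases h' : σ.support.card
        · exact hσ1 (Equiv.Perm.card_support_eq_zero.mp h')
        · exact σ.card_support_ne_one h'
      · exact h
    by_cases hc2 : σ.support.card = 2
    · obtain ⟨x, y, hxy, hxyeq⟩ := Equiv.Perm.card_support_eq_two.mp hc2
      subst hxyeq
      rcases lt_trichotomy (x : ℕ) (y : ℕ) with h | h | h
      · rw [hswapzero x y h hσs]; simp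
      · exact absurd (Fin.val_injective h) hxy
      · rw [Equiv.swap_comm, hswapzero y x h (by rwa [Equiv.swap_comm] at hσs)]; simp
    · -- at least 3 non-fixed points : degree too small
      have h3 : 3 ≤ σ.support.card := by omega
      have hnd : (∏ i, (Matrix.charmatrix A) (σ i) i).natDegree < m := by
        have hle := Polynomial.natDegree_prod_le Finset.univ
          (fun i => (Matrix.charmatrix A) (σ i) i)
        have hbound : ∑ i, ((Matrix.charmatrix A) (σ i) i).natDegree ≤
            ∑ i, if σ i = i then 1 else 0 :=
          Finset.sum_le_sum fun i _ => Matrix.charmatrix_apply_natDegree_le _ _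
        have hsum : (∑ i, if σ i = i then 1 else 0) =
            (Finset.univ.filter (fun i => σ i = i)).card := by
          simp [Finset.sum_boole]
        have hsplit := Finset.card_filter_add_card_filter_not
            (s := (Finset.univ : Finset (Fin (m+2)))) (p := fun i => σ i = i)
        have hsupp : Finset.univ.filter (fun i => ¬ σ i = i) = σ.support := by
          ext i; simp [Equiv.Perm.mem_support]
        rw [hsupp, Finset.card_univ, Fintype.card_fin] at hsplit
        omega
      rw [Polynomial.coeff_eq_zero_of_natDegree_lt hnd, mul_zero]


open Polynomial

/-- If the companion-plus-diagonal matrix has spectrum `λ_1, …, λ_n`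
(i.e. its characteristic polynomial over `ℂ` is `∏ (X - λ_i)`), then
`b_2 = (∑ λ_i² - ∑ a_i²) / 2`. -/
theorem b2_eq_half_s2_diff (n : ℕ) (hn : 2 ≤ n) (a b : ℕ → ℝ) (l : ℕ → ℂ)
    (hchar : (companionPlusDiag n a b).charpoly.map (algebraMap ℝ ℂ) =
      ∏ i ∈ Finset.range n, (X - C (l i))) :
    (b 2 : ℂ) =
      ((∑ i ∈ Finset.range n, (l i) ^ 2) - ∑ i ∈ Finset.range n, ((a i : ℂ)) ^ 2) / 2 := by
  obtain ⟨m, rfl⟩ : ∃ m, n = m + 2 := ⟨n - 2, by omega⟩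
  set A := companionPlusDiag (m+2) a b with hAdef
  have hAfun : ∀ i j : Fin (m+2), A i j = if (i : ℕ) = (j : ℕ) then a (i : ℕ)
      else if (i : ℕ) + 1 = (j : ℕ) then 1
      else if (i : ℕ) = (m+2) - 1 then b ((m+2) - (j : ℕ))
      else 0 := fun i j => rfl
  have hdiag : ∀ i : Fin (m+2), A i i = a (i : ℕ) := by
    intro i; rw [hAfun]; simp
  have hc1 : A.charpoly.coeff (m+1) = -∑ i ∈ Finset.range (m+2), a i := by
    rw [Matrix.charpoly_coeff_eq_prod_coeff_of_le]
    · have : ∀ i : Fin (m+2), (X : ℝ[X]) - C (A i i) = X - C (a (i : ℕ)) := by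
        intro i; rw [hdiag]
      simp_rw [this]
      rw [Fin.prod_univ_eq_prod_range (fun i => (X : ℝ[X]) - C (a i)) (m+2)]
      exact (aux_coeffs a m).1
    · simp
  have hc2 : A.charpoly.coeff m =
      (∑ i ∈ Finset.range (m+2), ∑ j ∈ Finset.range i, a i * a j) - b 2 :=
    aux_charpoly_coeff m a b A hAfun
  have hmap : ∀ k : ℕ, ((A.charpoly.coeff k : ℝ) : ℂ) =
      (∏ i ∈ Finset.range (m+2), (X - C (l i))).coeff k := by
    intro k
    rw [← hchar, Polynomial.coeff_map]
    rfl
  have e1 : (∑ i ∈ Finset.range (m+2), l i) = ∑ i ∈ Finset.range (m+2), (a i : ℂ) := by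
    have h := hmap (m+1)
    rw [hc1, (aux_coeffs l m).1] at h
    push_cast at h
    linear_combination h
  have e2' : (∑ i ∈ Finset.range (m+2), ∑ j ∈ Finset.range i, l i * l j) =
      (∑ i ∈ Finset.range (m+2), ∑ j ∈ Finset.range i, (a i : ℂ) * (a j : ℂ)) - (b 2 : ℂ) := by
    have h := hmap m
    rw [hc2, (aux_coeffs l m).2] at h
    push_cast at h
    linear_combination -h
  have q1 := aux_sq_sum l (m+2)
  have q2 := aux_sq_sum (fun i => (a i : ℂ)) (m+2)
  linear_combination (q1 - q2) / 2 -
    ((∑ i ∈ Finset.range (m+2), l i + ∑ i ∈ Finset.range (m+2), (a i : ℂ)) / 2) * e1 + e2'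
end

section
/- Let λ_1 ≥ λ_2 be real numbers and let a_1 ≥ a_2 ≥ 0 be real. There exists a 2×2 entrywise nonnegative real matrix with diagonal entries a_1, a_2 and characteristic polynomial (x − λ_1)(x − λ_2) if and only if a_1 ≤ λ_1 and a_1 + a_2 = λ_1 + λ_2. -/
open Polynomial

lemma charpoly_fin_two' (M : Matrix (Fin 2) (Fin 2) ℝ) :
    M.charpoly = X ^ 2 - C (M 0 0 + M 1 1) * X + C (M 0 0 * M 1 1 - M 0 1 * M 1 0) := by
  rw [Matrix.charpoly, Matrix.det_fin_two]
  simp [Matrix.charmatrix_apply_eq, Matrix.charmatrix_apply_ne, C_add, C_mul, C_sub]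
  ring

lemma expand_quad (l1 l2 : ℝ) :
    (X - C l1) * (X - C l2) = X ^ 2 - C (l1 + l2) * X + C (l1 * l2) := by
  simp [C_add, C_mul]; ring

/-- For `λ_1 ≥ λ_2` and `a_1 ≥ a_2 ≥ 0`, there exists a `2 × 2` entrywise
nonnegative matrix with diagonal entries `a_1, a_2` and spectrum `(λ_1, λ_2)` if and only if
`a_1 ≤ λ_1` and `a_1 + a_2 = λ_1 + λ_2`. -/
theorem two_by_two_diagonal (l1 l2 a1 a2 : ℝ) (hl : l2 ≤ l1) (ha : a2 ≤ a1) (ha2 : 0 ≤ a2) :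
    (∃ A : Matrix (Fin 2) (Fin 2) ℝ, (∀ i j, 0 ≤ A i j) ∧ A 0 0 = a1 ∧ A 1 1 = a2 ∧
        A.charpoly = (X - C l1) * (X - C l2)) ↔
      (a1 ≤ l1 ∧ a1 + a2 = l1 + l2) := by
  constructor
  · rintro ⟨A, hpos, h00, h11, hcp⟩
    rw [charpoly_fin_two', expand_quad, h00, h11] at hcp
    have h1 : a1 + a2 = l1 + l2 := by
      have := congrArg (fun p => coeff p 1) hcp
      simp at this; linarith
    have h0 : a1 * a2 - A 0 1 * A 1 0 = l1 * l2 := by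
      have := congrArg (fun p => coeff p 0) hcp
      have h := this; simp at h; linarith
    refine ⟨?_, h1⟩
    by_contra hlt
    push_neg at hlt
    have ha2l : a2 < l1 := by nlinarith
    have hprod : (a1 - l1) * (a2 - l1) ≥ 0 := by nlinarith [mul_nonneg (hpos 0 1) (hpos 1 0)]
    nlinarith
  · rintro ⟨hle, hsum⟩
    refine ⟨!![a1, 1; a1 * a2 - l1 * l2, a2], ?_, rfl, rfl, ?_⟩
    · intro i j
      fin_cases i <;> fin_cases j <;> simp
      · linarith
      · nlinarith
      · exact ha2
    · rw [charpoly_fin_two', expand_quad]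
      simp only [Matrix.cons_val', Matrix.cons_val_zero, Matrix.cons_val_one, Matrix.head_cons,
        Matrix.empty_val', Matrix.cons_val_fin_one, Matrix.head_fin_const, Matrix.of_apply]
      norm_num
      rw [← C_add, ← C_add, hsum]
end

section
/- Let λ_1 ≥ λ_2 ≥ λ_3 be real numbers and let a_1 ≥ a_2 ≥ a_3 ≥ 0 be real. There exists a 3×3 entrywise nonnegative real matrix with diagonal entries a_1, a_2, a_3 and characteristic polynomial (x − λ_1)(x − λ_2)(x − λ_3) if and only if: (i) λ_2 ≤ a_1 ≤ λ_1; (ii) a_1 + a_2 + a_3 = λ_1 + λ_2 + λ_3; and (iii) a_1² + a_2² + a_3² ≤ λ_1² + λ_2² + λ_3². Moreover, when (i)–(iii) hold, a realizing matrix may be chosen of the form with diagonal (a_1, a_2, a_3), entries 1 in positions (1,2) and (2,3), entries b_3, b_2 ≥ 0 in positions (3,1) and (3,2), and zeros elsewhere. -/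
open Polynomial

private lemma charpoly_eval3 (A : Matrix (Fin 3) (Fin 3) ℝ) (t : ℝ) :
    eval t A.charpoly = (t - A 0 0)*(t - A 1 1)*(t - A 2 2)
      - A 1 2*A 2 1*(t - A 0 0) - A 0 1*A 1 0*(t - A 2 2) - A 0 2*A 2 0*(t - A 1 1)
      - (A 0 1*A 1 2*A 2 0 + A 0 2*A 1 0*A 2 1) := by
  rw [Matrix.charpoly, Matrix.det_fin_three]
  simp [Matrix.charmatrix_apply_eq, Matrix.charmatrix_apply_ne]
  ring

/-- For `λ_1 ≥ λ_2 ≥ λ_3` and `a_1 ≥ a_2 ≥ a_3 ≥ 0`, there exists a `3 × 3`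
entrywise nonnegative matrix with diagonal `(a_1, a_2, a_3)` and spectrum `(λ_1, λ_2, λ_3)`
iff `λ_2 ≤ a_1 ≤ λ_1`, `a_1 + a_2 + a_3 = λ_1 + λ_2 + λ_3` and
`a_1² + a_2² + a_3² ≤ λ_1² + λ_2² + λ_3²`; moreover, in that case a realising matrix may be
chosen of the companion-plus-diagonal form. -/
theorem three_by_three_diagonal_real (l1 l2 l3 a1 a2 a3 : ℝ)
    (hl12 : l2 ≤ l1) (hl23 : l3 ≤ l2) (ha12 : a2 ≤ a1) (ha23 : a3 ≤ a2) (ha3 : 0 ≤ a3) :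
    ((∃ A : Matrix (Fin 3) (Fin 3) ℝ, (∀ i j, 0 ≤ A i j) ∧
        A 0 0 = a1 ∧ A 1 1 = a2 ∧ A 2 2 = a3 ∧
        A.charpoly = (X - C l1) * (X - C l2) * (X - C l3)) ↔
      (l2 ≤ a1 ∧ a1 ≤ l1 ∧ a1 + a2 + a3 = l1 + l2 + l3 ∧
        a1 ^ 2 + a2 ^ 2 + a3 ^ 2 ≤ l1 ^ 2 + l2 ^ 2 + l3 ^ 2)) ∧
    ((l2 ≤ a1 ∧ a1 ≤ l1 ∧ a1 + a2 + a3 = l1 + l2 + l3 ∧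
        a1 ^ 2 + a2 ^ 2 + a3 ^ 2 ≤ l1 ^ 2 + l2 ^ 2 + l3 ^ 2) →
      ∃ b2 b3 : ℝ, 0 ≤ b2 ∧ 0 ≤ b3 ∧
        (!![a1, 1, 0; 0, a2, 1; b3, b2, a3] : Matrix (Fin 3) (Fin 3) ℝ).charpoly =
          (X - C l1) * (X - C l2) * (X - C l3)) := by
  -- The "moreover" construction.
  have hmore : (l2 ≤ a1 ∧ a1 ≤ l1 ∧ a1 + a2 + a3 = l1 + l2 + l3 ∧
        a1 ^ 2 + a2 ^ 2 + a3 ^ 2 ≤ l1 ^ 2 + l2 ^ 2 + l3 ^ 2) →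
      ∃ b2 b3 : ℝ, 0 ≤ b2 ∧ 0 ≤ b3 ∧
        (!![a1, 1, 0; 0, a2, 1; b3, b2, a3] : Matrix (Fin 3) (Fin 3) ℝ).charpoly =
          (X - C l1) * (X - C l2) * (X - C l3) := by
    rintro ⟨h1, h2, h3, h4⟩
    refine ⟨a1*a2+a1*a3+a2*a3 - (l1*l2+l1*l3+l2*l3), -((a1-l1)*(a1-l2)*(a1-l3)), ?_, ?_, ?_⟩
    · nlinarith [h3, h4]
    · nlinarith [mul_nonneg (sub_nonneg.2 h1) (sub_nonneg.2 (le_trans hl23 h1))]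
    · apply Polynomial.funext
      intro t
      rw [charpoly_eval3]
      simp [Matrix.cons_val_two, Matrix.tail_cons]
      linear_combination (-(t^2) + a1^2) * h3
  refine ⟨⟨?_, ?_⟩, hmore⟩
  · -- forward direction of the iff
    rintro ⟨A, hA0, hd1, hd2, hd3, hA⟩
    have key : ∀ t : ℝ, (t - a1)*(t - a2)*(t - a3)
        - A 1 2*A 2 1*(t - a1) - A 0 1*A 1 0*(t - a3) - A 0 2*A 2 0*(t - a2)
        - (A 0 1*A 1 2*A 2 0 + A 0 2*A 1 0*A 2 1)
        = (t - l1)*(t - l2)*(t - l3) := by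
      intro t
      have h := congrArg (eval t) hA
      rw [charpoly_eval3, hd1, hd2, hd3] at h
      simpa using h
    have hc12 : 0 ≤ A 1 2 * A 2 1 := mul_nonneg (hA0 1 2) (hA0 2 1)
    have hc01 : 0 ≤ A 0 1 * A 1 0 := mul_nonneg (hA0 0 1) (hA0 1 0)
    have hc02 : 0 ≤ A 0 2 * A 2 0 := mul_nonneg (hA0 0 2) (hA0 2 0)
    have hcyc : 0 ≤ A 0 1*A 1 2*A 2 0 + A 0 2*A 1 0*A 2 1 := by
      have := mul_nonneg (mul_nonneg (hA0 0 1) (hA0 1 2)) (hA0 2 0)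
      have := mul_nonneg (mul_nonneg (hA0 0 2) (hA0 1 0)) (hA0 2 1)
      linarith
    have htr : a1 + a2 + a3 = l1 + l2 + l3 := by
      linear_combination (2 * key 0 - key 1 - key (-1)) / 2
    have he2 : (a1*a2+a1*a3+a2*a3) - (A 1 2*A 2 1 + A 0 1*A 1 0 + A 0 2*A 2 0)
        = l1*l2+l1*l3+l2*l3 := by
      linear_combination (key 1 - key (-1)) / 2
    have hsq : a1 ^ 2 + a2 ^ 2 + a3 ^ 2 ≤ l1 ^ 2 + l2 ^ 2 + l3 ^ 2 := by
      nlinarith [htr, he2, hc12, hc01, hc02]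
    have hPa1 : (a1 - l1)*(a1 - l2)*(a1 - l3) ≤ 0 := by
      have k := key a1
      nlinarith [mul_nonneg hc01 (by linarith : (0:ℝ) ≤ a1 - a3),
        mul_nonneg hc02 (by linarith : (0:ℝ) ≤ a1 - a2), hcyc]
    have h2 : a1 ≤ l1 := by
      by_contra h
      push_neg at h
      nlinarith [mul_pos (mul_pos (by linarith : (0:ℝ) < a1 - l1)
        (by linarith : (0:ℝ) < a1 - l2)) (by linarith : (0:ℝ) < a1 - l3)]
    have h1 : l2 ≤ a1 := by
      by_contra h
      push_neg at h
      rcases lt_or_ge l3 a1 with h' | h'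
      · nlinarith [mul_pos (mul_pos_of_neg_of_neg (by linarith : a1 - l1 < 0)
          (by linarith : a1 - l2 < 0)) (by linarith : (0:ℝ) < a1 - l3)]
      · linarith
    exact ⟨h1, h2, htr, hsq⟩
  · -- reverse direction of the iff
    intro h
    obtain ⟨b2, b3, hb2, hb3, hcp⟩ := hmore h
    refine ⟨!![a1, 1, 0; 0, a2, 1; b3, b2, a3], ?_, ?_, ?_, ?_, hcp⟩
    · intro i j
      fin_cases i <;> fin_cases j <;>
        simp [Matrix.cons_val_two, Matrix.tail_cons] <;> first | exact hb2 | exact hb3 | linarith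
    · simp
    · simp
    · simp [Matrix.cons_val_two, Matrix.tail_cons]
end

section
/- Let f(x) = x^n + c_1 x^{n−1} + c_2 x^{n−2} + ⋯ + c_n be a real polynomial that factors over ℂ as (x − ρ)·∏_{i=2}^{n}(x − λ_i), where ρ is real and λ_2, …, λ_n are complex numbers with nonpositive real parts. Then for each k ∈ {1, 2, …, n−2}, if c_k ≤ 0 then c_{k+2} ≤ 0. -/
open Polynomial


/-- Invariant on (ℤ-indexed, ascending) coefficient sequences of monic real polynomials
whose complex roots all have nonpositive real part. `d` is the degree. -/
def SeqGood (d : ℤ) (a : ℤ → ℝ) : Prop :=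
  (∀ i, 0 ≤ a i) ∧
  (∀ v : ℤ, a (v+1) * a (v-2) ≤ a v * a (v-1)) ∧
  (∀ u v : ℤ, u ≤ v → a (v+2) * a (u-2) ≤ a v * a u) ∧
  (∀ m : ℤ, m + 1 ≤ d → a m = 0 → a (m+1) = 0 → a (m-1) = 0)

lemma seq_S3 {a : ℤ → ℝ} (hA : ∀ i, 0 ≤ a i)
    (hB : ∀ v : ℤ, a (v+1) * a (v-2) ≤ a v * a (v-1))
    (hI : ∀ u v : ℤ, u ≤ v → a (v+2) * a (u-2) ≤ a v * a u) (v : ℤ) :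
    a (v+1) * a (v-4) ≤ a v * a (v-3) := by
  have hI' := hI (v-2) (v-1) (by linarith)
  rw [show v-1+2 = v+1 by ring, show v-2-2 = v-4 by ring] at hI'
  rcases eq_or_lt_of_le (hA (v-1)) with h1 | h1
  · nlinarith [mul_nonneg (hA v) (hA (v-3)), hA (v-2)]
  rcases eq_or_lt_of_le (hA (v-2)) with h2 | h2
  · nlinarith [mul_nonneg (hA v) (hA (v-3)), hA (v-1)]
  have e1 := mul_le_mul_of_nonneg_right (hB v) (hA (v-4))
  have e2' := hB (v-2)
  rw [show v-2+1 = v-1 by ring, show v-2-2 = v-4 by ring, show v-2-1 = v-3 by ring] at e2'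
  have e2 := mul_le_mul_of_nonneg_left e2' (hA v)
  nlinarith [mul_pos h1 h2]

lemma seqGood_one : SeqGood 0 (fun i => if i = 0 then (1:ℝ) else 0) := by
  refine ⟨fun i => by dsimp only; split <;> norm_num, fun v => ?_, fun u v huv => ?_, fun m hm h0 h1 => ?_⟩
  · dsimp only
    rcases eq_or_ne v 0 with rfl | hv
    · norm_num
    rcases eq_or_ne v 1 with rfl | hv1
    · norm_num
    have : ¬ (v + 1 = 0 ∧ v - 2 = 0) := by omega
    by_cases hc : v + 1 = 0
    · simp [hc, show v - 2 ≠ 0 by omega]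
      positivity
    · simp [hc]
      positivity
  · dsimp only
    have : ¬ (v + 2 = 0 ∧ u - 2 = 0) := by omega
    by_cases hc : v + 2 = 0
    · simp [hc, show u - 2 ≠ 0 by omega]
      positivity
    · simp [hc]
      positivity
  · dsimp only at h0 h1 ⊢
    split
    · exfalso; omega
    · rfl

lemma seqGood_linear {d : ℤ} {a : ℤ → ℝ} {α : ℝ} (hα : 0 ≤ α) (h : SeqGood d a) :
    SeqGood (d+1) (fun i => a (i-1) + α * a i) := by
  obtain ⟨hA, hB, hI, hD⟩ := h
  refine ⟨fun i => add_nonneg (hA _) (mul_nonneg hα (hA _)), fun v => ?_,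
    fun u v huv => ?_, fun m hm h0 h1 => ?_⟩
  · dsimp only
    rw [show v+1-1 = v by ring, show v-2-1 = v-3 by ring, show v-1-1 = v-2 by ring]
    have t1 := hB (v-1)
    rw [show v-1+1 = v by ring, show v-1-2 = v-3 by ring, show v-1-1 = v-2 by ring] at t1
    have t3 := hB v
    have t2 := hI (v-1) (v-1) le_rfl
    rw [show v-1+2 = v+1 by ring, show v-1-2 = v-3 by ring] at t2
    nlinarith [mul_le_mul_of_nonneg_left t2 hα, mul_le_mul_of_nonneg_left t3 (mul_nonneg hα hα), t1]
  · dsimp only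
    rw [show v+2-1 = v+1 by ring, show u-2-1 = u-3 by ring]
    have t1 := hI (u-1) (v-1) (by linarith)
    rw [show v-1+2 = v+1 by ring, show u-1-2 = u-3 by ring] at t1
    have t4 := hI u v huv
    have t3 := hI (u-1) v (by linarith)
    rw [show u-1-2 = u-3 by ring] at t3
    have t2 : a (v+1) * a (u-2) ≤ a (v-1) * a u := by
      rcases lt_or_eq_of_le huv with hlt | rfl
      · have := hI u (v-1) (by linarith)
        rwa [show v-1+2 = v+1 by ring] at this
      · nlinarith [hB u]
    nlinarith [t1, mul_le_mul_of_nonneg_left t2 hα, mul_le_mul_of_nonneg_left t3 hα,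
      mul_le_mul_of_nonneg_left t4 (mul_nonneg hα hα)]
  · dsimp only at h0 h1 ⊢
    have e0 := (add_eq_zero_iff_of_nonneg (hA _) (mul_nonneg hα (hA _))).mp h0
    have e1 := (add_eq_zero_iff_of_nonneg (hA _) (mul_nonneg hα (hA _))).mp h1
    rw [show m+1-1 = m by ring] at e1
    have ham1 : a (m-1) = 0 := e0.1
    have ham : a m = 0 := e1.1
    have h2 : a (m-2) = 0 := by
      have := hD (m-1) (by linarith) ham1 (by rwa [show m-1+1 = m by ring])
      rwa [show m-1-1 = m-2 by ring] at this
    rw [show m-1-1 = m-2 by ring, h2, ham1, mul_zero, add_zero]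

lemma seqGood_quadratic {d : ℤ} {a : ℤ → ℝ} {p q : ℝ} (hp : 0 ≤ p) (hq : 0 ≤ q)
    (h : SeqGood d a) :
    SeqGood (d+2) (fun i => a (i-2) + p * a (i-1) + q * a i) := by
  obtain ⟨hA, hB, hI, hD⟩ := h
  refine ⟨fun i => add_nonneg (add_nonneg (hA _) (mul_nonneg hp (hA _))) (mul_nonneg hq (hA _)),
    fun v => ?_, fun u v huv => ?_, fun m hm h0 h1 => ?_⟩
  · dsimp only
    rw [show v+1-2 = v-1 by ring, show v+1-1 = v by ring, show v-2-2 = v-4 by ring,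
      show v-2-1 = v-3 by ring, show v-1-2 = v-3 by ring, show v-1-1 = v-2 by ring]
    have d0 := hB (v-2)
    rw [show v-2+1 = v-1 by ring, show v-2-2 = v-4 by ring, show v-2-1 = v-3 by ring] at d0
    have d1 := hB (v-1)
    rw [show v-1+1 = v by ring, show v-1-2 = v-3 by ring, show v-1-1 = v-2 by ring] at d1
    have d2 := hB v
    have m01 := hI (v-2) (v-2) le_rfl
    rw [show v-2+2 = v by ring, show v-2-2 = v-4 by ring] at m01
    have m12 := hI (v-1) (v-1) le_rfl
    rw [show v-1+2 = v+1 by ring, show v-1-2 = v-3 by ring] at m12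
    have m02 := seq_S3 hA hB hI v
    nlinarith [d0, mul_le_mul_of_nonneg_left d1 (mul_nonneg hp hp),
      mul_le_mul_of_nonneg_left d2 (mul_nonneg hq hq),
      mul_le_mul_of_nonneg_left m01 hp,
      mul_le_mul_of_nonneg_left m12 (mul_nonneg hp hq),
      mul_le_mul_of_nonneg_left m02 hq]
  · dsimp only
    rw [show v+2-2 = v by ring, show v+2-1 = v+1 by ring, show u-2-2 = u-4 by ring,
      show u-2-1 = u-3 by ring]
    have D0 := hI (u-2) (v-2) (by linarith)
    rw [show v-2+2 = v by ring, show u-2-2 = u-4 by ring] at D0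
    have D1 := hI (u-1) (v-1) (by linarith)
    rw [show v-1+2 = v+1 by ring, show u-1-2 = u-3 by ring] at D1
    have D2 := hI u v huv
    have P : a v * a (u-3) + a (v+1) * a (u-4) ≤ a (v-2) * a (u-1) + a (v-1) * a (u-2) := by
      have p2 := hI (u-2) (v-1) (by linarith)
      rw [show v-1+2 = v+1 by ring, show u-2-2 = u-4 by ring] at p2
      rcases lt_or_eq_of_le huv with hlt | rfl
      · have p1 := hI (u-1) (v-2) (by linarith)
        rw [show v-2+2 = v by ring, show u-1-2 = u-3 by ring] at p1
        linarith
      · have p1 := hB (u-1)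
        rw [show u-1+1 = u by ring, show u-1-2 = u-3 by ring, show u-1-1 = u-2 by ring] at p1
        nlinarith
    have Q : a (v+2) * a (u-4) ≤ a (v-2) * a u := by
      have q1 := hI (u-2) v (by linarith)
      rw [show u-2-2 = u-4 by ring] at q1
      rcases lt_or_eq_of_le huv with hlt | rfl
      · rcases lt_or_eq_of_le (Int.lt_iff_add_one_le.mp hlt) with hlt2 | heq
        · have q2 := hI u (v-2) (by linarith)
          rw [show v-2+2 = v by ring] at q2
          linarith
        · -- u + 1 = v
          have q2 := hB (v-1)
          rw [show v-1+1 = v by ring, show v-1-2 = v-3 by ring, show v-1-1 = v-2 by ring] at q2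
          have : u - 2 = v - 3 := by omega
          rw [this] at q1
          have : u = v - 1 := by omega
          subst this
          nlinarith
      · nlinarith [hI (u-2) u (by linarith), hA (u+2), hA (u-4)]
    have R : a (v+1) * a (u-2) + a (v+2) * a (u-3) ≤ a (v-1) * a u + a v * a (u-1) := by
      have r2 := hI (u-1) v (by linarith)
      rw [show u-1-2 = u-3 by ring] at r2
      rcases lt_or_eq_of_le huv with hlt | rfl
      · have r1 := hI u (v-1) (by linarith)
        rw [show v-1+2 = v+1 by ring] at r1
        linarith
      · nlinarith [hB u]
    nlinarith [D0, mul_le_mul_of_nonneg_left D1 (mul_nonneg hp hp),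
      mul_le_mul_of_nonneg_left D2 (mul_nonneg hq hq),
      mul_le_mul_of_nonneg_left P hp, mul_le_mul_of_nonneg_left Q hq,
      mul_le_mul_of_nonneg_left R (mul_nonneg hp hq)]
  · dsimp only at h0 h1 ⊢
    have e0 := (add_eq_zero_iff_of_nonneg (add_nonneg (hA _) (mul_nonneg hp (hA _)))
      (mul_nonneg hq (hA _))).mp h0
    have e0' := (add_eq_zero_iff_of_nonneg (hA _) (mul_nonneg hp (hA _))).mp e0.1
    have e1 := (add_eq_zero_iff_of_nonneg (add_nonneg (hA _) (mul_nonneg hp (hA _)))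
      (mul_nonneg hq (hA _))).mp h1
    have e1' := (add_eq_zero_iff_of_nonneg (hA _) (mul_nonneg hp (hA _))).mp e1.1
    rw [show m+1-2 = m-1 by ring] at e1'
    have ham2 : a (m-2) = 0 := e0'.1
    have ham1 : a (m-1) = 0 := e1'.1
    have h3 : a (m-3) = 0 := by
      have := hD (m-2) (by linarith) ham2 (by rwa [show m-2+1 = m-1 by ring])
      rwa [show m-2-1 = m-3 by ring] at this
    rw [show m-1-2 = m-3 by ring, show m-1-1 = m-2 by ring, h3, ham2, ham1]
    ring

open Polynomial


noncomputable def acoeff (g : ℝ[X]) : ℤ → ℝ := fun i => if 0 ≤ i then g.coeff i.toNat else 0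

lemma acoeff_neg (g : ℝ[X]) {i : ℤ} (h : i < 0) : acoeff g i = 0 := by
  simp [acoeff, not_le.mpr h]

lemma acoeff_eq (g : ℝ[X]) {i : ℤ} (h : 0 ≤ i) : acoeff g i = g.coeff i.toNat := if_pos h

lemma acoeff_ofNat (g : ℝ[X]) (k : ℕ) : acoeff g (k : ℤ) = g.coeff k := by
  simp [acoeff]

lemma acoeff_linear (α : ℝ) (g : ℝ[X]) (i : ℤ) :
    acoeff ((X + C α) * g) i = acoeff g (i-1) + α * acoeff g i := by
  have hcoeff : ∀ k : ℕ, ((X + C α) * g).coeff (k+1) = g.coeff k + α * g.coeff (k+1) := by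
    intro k
    rw [add_mul, coeff_add, coeff_X_mul, coeff_C_mul]
  rcases lt_trichotomy i 0 with h | h | h
  · rw [acoeff_neg _ h, acoeff_neg g (show i - 1 < 0 by omega), acoeff_neg _ h]; ring
  · subst h
    rw [acoeff_neg g (show (0:ℤ) - 1 < 0 by norm_num), acoeff_eq _ le_rfl, acoeff_eq g le_rfl,
      show (0:ℤ).toNat = 0 from rfl]
    rw [add_mul, coeff_add, coeff_C_mul, mul_coeff_zero, coeff_X_zero]; ring
  · obtain ⟨k, rfl⟩ : ∃ k : ℕ, i = (k : ℤ) + 1 := ⟨(i-1).toNat, by omega⟩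
    rw [acoeff_eq _ (by omega), acoeff_eq g (by omega), acoeff_eq g (by omega),
      show ((k:ℤ) + 1).toNat = k + 1 by omega, show ((k:ℤ) + 1 - 1).toNat = k by omega, hcoeff]

lemma acoeff_quadratic (p q : ℝ) (g : ℝ[X]) (i : ℤ) :
    acoeff ((X^2 + C p * X + C q) * g) i
      = acoeff g (i-2) + p * acoeff g (i-1) + q * acoeff g i := by
  have hc0 : ((X^2 + C p * X + C q) * g).coeff 0 = q * g.coeff 0 := by
    simp [add_mul, mul_coeff_zero, coeff_X_zero, coeff_X_pow]
  have hc1 : ((X^2 + C p * X + C q) * g).coeff 1 = p * g.coeff 0 + q * g.coeff 1 := by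
    rw [add_mul, add_mul, coeff_add, coeff_add, coeff_C_mul]
    rw [sq, mul_assoc X X g, show (1:ℕ) = 0+1 from rfl, coeff_X_mul, mul_coeff_zero,
      coeff_X_zero, zero_mul]
    rw [mul_assoc, coeff_C_mul, coeff_X_mul]
    ring
  have hcoeff : ∀ k : ℕ, ((X^2 + C p * X + C q) * g).coeff (k+2)
      = g.coeff k + p * g.coeff (k+1) + q * g.coeff (k+2) := by
    intro k
    rw [add_mul, add_mul, coeff_add, coeff_add, coeff_C_mul]
    rw [show (k+2) = (k+1)+1 from rfl, sq, mul_assoc X X g, coeff_X_mul, coeff_X_mul]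
    rw [mul_assoc, coeff_C_mul, coeff_X_mul]
  rcases lt_trichotomy i 0 with h | h | h
  · rw [acoeff_neg _ h, acoeff_neg g (show i-2 < 0 by omega), acoeff_neg g (show i-1 < 0 by omega),
      acoeff_neg _ h]; ring
  · subst h
    rw [acoeff_neg g (show (0:ℤ)-2 < 0 by norm_num), acoeff_neg g (show (0:ℤ)-1 < 0 by norm_num),
      acoeff_eq _ le_rfl, acoeff_eq g le_rfl, show (0:ℤ).toNat = 0 from rfl, hc0]
    ring
  · by_cases hi1 : i = 1
    · subst hi1
      rw [acoeff_neg g (show (1:ℤ)-2 < 0 by norm_num), acoeff_eq _ (by norm_num),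
        acoeff_eq g (by norm_num : (0:ℤ) ≤ 1 - 1), acoeff_eq g (by norm_num : (0:ℤ) ≤ 1),
        show ((1:ℤ)).toNat = 1 from rfl, show ((1:ℤ)-1).toNat = 0 by norm_num, hc1]
      ring
    · obtain ⟨k, rfl⟩ : ∃ k : ℕ, i = (k : ℤ) + 2 := ⟨(i-2).toNat, by omega⟩
      rw [acoeff_eq _ (by omega), acoeff_eq g (by omega), acoeff_eq g (by omega),
        acoeff_eq g (by omega), show ((k:ℤ)+2).toNat = k+2 by omega,
        show ((k:ℤ)+2-1).toNat = k+1 by omega, show ((k:ℤ)+2-2).toNat = k by omega, hcoeff]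

lemma seqGood_congr {d : ℤ} {a b : ℤ → ℝ} (h : ∀ i, a i = b i) (hg : SeqGood d a) :
    SeqGood d b := by
  have : a = b := funext h
  rwa [← this]

lemma good_of_roots (N : ℕ) : ∀ g : ℝ[X], g.natDegree = N → g.Monic →
    (∀ z : ℂ, (g.map (algebraMap ℝ ℂ)).IsRoot z → z.re ≤ 0) →
    SeqGood (g.natDegree : ℤ) (acoeff g) := by
  induction N using Nat.strong_induction_on with
  | _ N ih =>
  intro g hdeg hmon hroots
  rcases Nat.eq_zero_or_pos N with rfl | hpos
  · have hg1 : g = 1 := hmon.natDegree_eq_zero.mp hdeg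
    subst hg1
    have h0 : ((1 : ℝ[X]).natDegree : ℤ) = 0 := by simp
    rw [h0]
    apply seqGood_congr _ seqGood_one
    intro i
    rcases lt_trichotomy i 0 with h | h | h
    · rw [acoeff_neg _ h, if_neg (by omega)]
    · subst h; rw [acoeff_eq _ le_rfl]; simp
    · rw [acoeff_eq _ (le_of_lt h), if_neg (by omega : ¬ i = 0), coeff_one,
        if_neg (by omega : ¬ i.toNat = 0)]
  · have hne : g ≠ 0 := hmon.ne_zero
    have hmapmon : (g.map (algebraMap ℝ ℂ)).Monic := hmon.map _
    have hmapdeg : (g.map (algebraMap ℝ ℂ)).natDegree = N := by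
      rw [hmon.natDegree_map]; exact hdeg
    obtain ⟨z, hz⟩ := Complex.exists_root (f := g.map (algebraMap ℝ ℂ))
      (natDegree_pos_iff_degree_pos.mp (by omega))
    have hzre : z.re ≤ 0 := hroots z hz
    have haev : aeval z g = 0 := by rw [aeval_def, ← eval_map]; exact hz
    by_cases him : z.im = 0
    · -- real root
      have hzeq : ((z.re : ℝ) : ℂ) = z := Complex.ext rfl (by simp [him])
      have hroot : g.IsRoot z.re := by
        rw [← hzeq] at haev
        erw [aeval_ofReal, RCLike.ofReal_eq_zero] at haev
        exact haev
      obtain ⟨g₁, hfac⟩ := dvd_iff_isRoot.mpr hroot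
      have hXm : (X - C z.re).Monic := monic_X_sub_C z.re
      have hg₁mon : g₁.Monic := hXm.of_mul_monic_left (hfac ▸ hmon)
      have hdeg1 : 1 + g₁.natDegree = N := by
        have := hdeg
        rw [hfac, natDegree_mul hXm.ne_zero hg₁mon.ne_zero, natDegree_X_sub_C] at this
        exact this
      have hroots₁ : ∀ w : ℂ, (g₁.map (algebraMap ℝ ℂ)).IsRoot w → w.re ≤ 0 := by
        intro w hw
        apply hroots
        rw [IsRoot] at hw ⊢
        rw [hfac, Polynomial.map_mul, eval_mul, hw, mul_zero]
      have IH := ih g₁.natDegree (by omega) g₁ rfl hg₁mon hroots₁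
      set α : ℝ := -z.re with hα
      have hα0 : 0 ≤ α := by rw [hα]; linarith
      have hfac' : g = (X + C α) * g₁ := by
        rw [hfac, hα, map_neg, ← sub_eq_add_neg]
      have hgd := seqGood_linear hα0 IH
      rw [show (g.natDegree : ℤ) = (g₁.natDegree : ℤ) + 1 by omega]
      apply seqGood_congr _ hgd
      intro i
      rw [hfac', acoeff_linear]
    · -- nonreal root
      have hdvd := g.quadratic_dvd_of_aeval_eq_zero_im_ne_zero haev him
      set pr : ℝ := -(2 * z.re) with hpr
      set qr : ℝ := ‖z‖^2 with hqr
      have hQ : X^2 - C (2*z.re) * X + C (‖z‖^2) = X^2 + C pr * X + C qr := by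
        rw [hpr, hqr, map_neg]; ring
      rw [hQ] at hdvd
      obtain ⟨g₂, hfac⟩ := hdvd
      have hQmon : (X^2 + C pr * X + C qr).Monic := by monicity!
      have hQdeg : (X^2 + C pr * X + C qr : ℝ[X]).natDegree = 2 := by compute_degree!
      have hg₂mon : g₂.Monic := hQmon.of_mul_monic_left (hfac ▸ hmon)
      have hdeg2 : 2 + g₂.natDegree = N := by
        have := hdeg
        rw [hfac, natDegree_mul hQmon.ne_zero hg₂mon.ne_zero, hQdeg] at this
        exact this
      have hroots₂ : ∀ w : ℂ, (g₂.map (algebraMap ℝ ℂ)).IsRoot w → w.re ≤ 0 := by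
        intro w hw
        apply hroots
        rw [IsRoot] at hw ⊢
        rw [hfac, Polynomial.map_mul, eval_mul, hw, mul_zero]
      have IH := ih g₂.natDegree (by omega) g₂ rfl hg₂mon hroots₂
      have hpr0 : 0 ≤ pr := by rw [hpr]; linarith
      have hqr0 : 0 ≤ qr := by rw [hqr]; positivity
      have hgd := seqGood_quadratic hpr0 hqr0 IH
      rw [show (g.natDegree : ℤ) = (g₂.natDegree : ℤ) + 2 by omega]
      apply seqGood_congr _ hgd
      intro i
      rw [hfac, acoeff_quadratic]


/-- Let `f(x) = x^n + c_1 x^{n−1} + ⋯ + c_n` be a real polynomial that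
factors over `ℂ` as `(x − ρ)·∏_{i=2}^n (x − λ_i)`, where `ρ` is real and `λ_2, …, λ_n`
have nonpositive real parts. Then for each `k ∈ {1, …, n−2}`, `c_k ≤ 0` implies
`c_{k+2} ≤ 0`. -/
theorem coeff_sign_propagation (n : ℕ) (c : ℕ → ℝ) (ρ : ℝ) (l : ℕ → ℂ)
    (hRe : ∀ i ∈ Finset.Icc 2 n, (l i).re ≤ 0)
    (hfactor : ((X : ℝ[X]) ^ n + ∑ i ∈ Finset.Icc 1 n, C (c i) * X ^ (n - i)).map
        (algebraMap ℝ ℂ) =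
      (X - C (ρ : ℂ)) * ∏ i ∈ Finset.Icc 2 n, (X - C (l i))) :
    ∀ k, 1 ≤ k → k ≤ n - 2 → c k ≤ 0 → c (k + 2) ≤ 0 := by
  
  intro k hk1 hk2 hck
  have hn3 : 3 ≤ n := by omega
  set F : ℝ[X] := X ^ n + ∑ i ∈ Finset.Icc 1 n, C (c i) * X ^ (n - i) with hFdef
  have hsumlt : (∑ i ∈ Finset.Icc 1 n, C (c i) * X ^ (n - i)).degree < ((n : ℕ) : WithBot ℕ) := by
    apply lt_of_le_of_lt (degree_sum_le _ _)
    rw [Finset.sup_lt_iff (by exact_mod_cast WithBot.bot_lt_coe n)]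
    intro i hi
    apply lt_of_le_of_lt (degree_C_mul_X_pow_le _ _)
    have := Finset.mem_Icc.mp hi
    exact_mod_cast Nat.cast_lt.mpr (by omega : n - i < n)
  have hFmon : F.Monic := monic_X_pow_add hsumlt
  have hFdeg : F.natDegree = n := by
    have hdeg : F.degree = n := by
      rw [hFdef, degree_add_eq_left_of_degree_lt (by rwa [degree_X_pow]), degree_X_pow]
    exact natDegree_eq_of_degree_eq_some hdeg
  have hcoeffF : ∀ j : ℕ, 1 ≤ j → j ≤ n → F.coeff (n - j) = c j := by
    intro j h1 h2
    have e : F.coeff (n - j)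
        = (X ^ n : ℝ[X]).coeff (n - j)
          + ∑ i ∈ Finset.Icc 1 n, ((C (c i) * X ^ (n - i)).coeff (n - j)) := by
      rw [hFdef, coeff_add, finset_sum_coeff]
    rw [e, coeff_X_pow, if_neg (by omega : ¬ n - j = n), zero_add,
      Finset.sum_eq_single_of_mem j (Finset.mem_Icc.mpr ⟨h1, h2⟩)
        (fun i hi hne => by
          have := Finset.mem_Icc.mp hi
          rw [coeff_C_mul, coeff_X_pow, if_neg (by omega : ¬ n - j = n - i), mul_zero]),
      coeff_C_mul, coeff_X_pow, if_pos rfl, mul_one]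
  have hXdvd : (X - C ρ : ℝ[X]) ∣ F := by
    rw [← map_dvd_map (algebraMap ℝ ℂ) (algebraMap ℝ ℂ).injective (monic_X_sub_C ρ)]
    rw [hfactor, Polynomial.map_sub, map_X, map_C, Complex.coe_algebraMap]
    exact Dvd.intro _ rfl
  obtain ⟨g, hFg⟩ := hXdvd
  have hgmon : g.Monic := (monic_X_sub_C ρ).of_mul_monic_left (hFg ▸ hFmon)
  have hdeg1 : 1 + g.natDegree = n := by
    have := hFdeg
    rw [hFg, natDegree_mul (X_sub_C_ne_zero ρ) hgmon.ne_zero, natDegree_X_sub_C] at this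
    exact this
  have hgmap : g.map (algebraMap ℝ ℂ) = ∏ i ∈ Finset.Icc 2 n, (X - C (l i)) := by
    apply mul_left_cancel₀ (X_sub_C_ne_zero (ρ : ℂ))
    rw [← hfactor, hFg, Polynomial.map_mul, Polynomial.map_sub, map_X, map_C,
      Complex.coe_algebraMap]
  have hgroots : ∀ w : ℂ, (g.map (algebraMap ℝ ℂ)).IsRoot w → w.re ≤ 0 := by
    intro w hw
    rw [IsRoot, hgmap, eval_prod] at hw
    obtain ⟨i, hi, hzero⟩ := Finset.prod_eq_zero_iff.mp hw
    rw [eval_sub, eval_X, eval_C, sub_eq_zero] at hzero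
    rw [hzero]
    exact hRe i hi
  obtain ⟨hA, hB, hI, hD⟩ := good_of_roots g.natDegree g rfl hgmon hgroots
  have hFg' : F = (X + C (-ρ)) * g := by rw [hFg, map_neg, ← sub_eq_add_neg]
  have hrel : ∀ j : ℕ, 1 ≤ j → j ≤ n →
      c j = acoeff g ((n : ℤ) - j - 1) + (-ρ) * acoeff g ((n : ℤ) - j) := by
    intro j h1 h2
    have e : ((n - j : ℕ) : ℤ) = (n : ℤ) - j := by omega
    calc c j = F.coeff (n - j) := (hcoeffF j h1 h2).symm
    _ = acoeff F ((n - j : ℕ) : ℤ) := (acoeff_ofNat F _).symm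
    _ = acoeff g (((n - j : ℕ) : ℤ) - 1) + (-ρ) * acoeff g ((n - j : ℕ) : ℤ) := by
        rw [hFg', acoeff_linear]
    _ = acoeff g ((n : ℤ) - j - 1) + (-ρ) * acoeff g ((n : ℤ) - j) := by rw [e]
  have hck' := hrel k hk1 (by omega)
  have hck2 := hrel (k + 2) (by omega) (by omega)
  rw [show ((n : ℤ) - (k + 2 : ℕ) - 1) = (n : ℤ) - k - 3 by push_cast; ring,
    show ((n : ℤ) - (k + 2 : ℕ)) = (n : ℤ) - k - 2 by push_cast; ring] at hck2
  rw [hck'] at hck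
  rw [hck2]
  rcases eq_or_lt_of_le (hA ((n : ℤ) - k)) with hu | hu
  · -- acoeff g (n - k) = 0
    rw [← hu] at hck
    have hu1 : acoeff g ((n : ℤ) - k - 1) = 0 := by
      have h1 := hA ((n : ℤ) - k - 1)
      linarith
    have hu2 : acoeff g ((n : ℤ) - k - 2) = 0 := by
      have := hD ((n : ℤ) - k - 1) (by omega) hu1
        (by rw [show (n : ℤ) - k - 1 + 1 = (n : ℤ) - k by ring]; exact hu.symm)
      rwa [show (n : ℤ) - k - 1 - 1 = (n : ℤ) - k - 2 by ring] at this
    have hu3 : acoeff g ((n : ℤ) - k - 3) = 0 := by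
      have := hD ((n : ℤ) - k - 2) (by omega) hu2
        (by rw [show (n : ℤ) - k - 2 + 1 = (n : ℤ) - k - 1 by ring]; exact hu1)
      rwa [show (n : ℤ) - k - 2 - 1 = (n : ℤ) - k - 3 by ring] at this
    rw [hu2, hu3]
    ring_nf
    exact le_rfl
  · -- acoeff g (n - k) > 0
    have hρ : acoeff g ((n : ℤ) - k - 1) ≤ ρ * acoeff g ((n : ℤ) - k) := by linarith
    have hBv := hB ((n : ℤ) - k - 1)
    rw [show (n : ℤ) - k - 1 + 1 = (n : ℤ) - k by ring,
      show (n : ℤ) - k - 1 - 2 = (n : ℤ) - k - 3 by ring,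
      show (n : ℤ) - k - 1 - 1 = (n : ℤ) - k - 2 by ring] at hBv
    nlinarith [mul_le_mul_of_nonneg_right hρ (hA ((n : ℤ) - k - 2)), hBv, hu,
      hA ((n : ℤ) - k - 2), hA ((n : ℤ) - k - 3)]
end

section
/- Let X = (x_1, …, x_n) be a self-conjugate list of complex numbers (i.e., the multiset of the x_i is closed under complex conjugation) with Re(x_i) ≥ 0 for all i, so that every elementary symmetric function e_k(X) is a real number. If k and l are integers of different parity with 1 ≤ k < l ≤ n−1, then e_k(X)·e_l(X) ≥ e_{k−1}(X)·e_{l+1}(X) (as an inequality of real numbers). -/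
/-- Newton-like 2x2 Hurwitz minor nonnegativity property for a sequence indexed by ℤ. -/
def GoodSeq (E : ℤ → ℝ) : Prop :=
  (∀ j, 0 ≤ E j) ∧ ∀ p q d : ℤ, 1 ≤ d → 2 ≤ q - p + d → (p + q + d) % 2 = 0 →
    E (p - d) * E (q + d) ≤ E p * E q

lemma GoodSeq.g_nonneg {E : ℤ → ℝ} (h : GoodSeq E) (p q d : ℤ) (hd : 0 ≤ d)
    (hqp : 0 ≤ q - p + d) (hpar : (p + q + d) % 2 = 0) :
    E (p - d) * E (q + d) ≤ E p * E q := by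
  rcases eq_or_lt_of_le hd with h0 | hd1
  · simp [← h0]
  rcases eq_or_lt_of_le hqp with h2 | h3
  · have e1 : p - d = q := by omega
    have e2 : q + d = p := by omega
    rw [e1, e2, mul_comm]
  · exact h.2 p q d (by omega) (by omega) hpar

lemma GoodSeq.linear {E : ℤ → ℝ} (h : GoodSeq E) {a : ℝ} (ha : 0 ≤ a) :
    GoodSeq (fun j => E j + a * E (j - 1)) := by
  constructor
  · intro j; exact add_nonneg (h.1 j) (mul_nonneg ha (h.1 _))
  · intro p q d hd hqpd hpar
    have g1 := h.g_nonneg p q d (by omega) (by omega) (by omega)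
    have g2 := h.g_nonneg p (q-1) (d+1) (by omega) (by omega) (by omega)
    have g3 := h.g_nonneg (p-1) q (d-1) (by omega) (by omega) (by omega)
    have g4 := h.g_nonneg (p-1) (q-1) d (by omega) (by omega) (by omega)
    simp only
    have e1 : p - (d+1) = p - d - 1 := by ring
    have e2 : q - 1 + (d+1) = q + d := by ring
    have e3 : p - 1 - (d-1) = p - d := by ring
    have e4 : q + (d-1) = q + d - 1 := by ring
    have e5 : p - 1 - d = p - d - 1 := by ring
    have e6 : q - 1 + d = q + d - 1 := by ring
    rw [e1, e2] at g2; rw [e3, e4] at g3; rw [e5, e6] at g4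
    nlinarith [mul_nonneg ha (sub_nonneg.2 g2), mul_nonneg ha (sub_nonneg.2 g3),
      mul_nonneg (mul_nonneg ha ha) (sub_nonneg.2 g4)]

lemma GoodSeq.quadratic {E : ℤ → ℝ} (h : GoodSeq E) {b c : ℝ} (hb : 0 ≤ b) (hc : 0 ≤ c) :
    GoodSeq (fun j => E j + b * E (j - 1) + c * E (j - 2)) := by
  constructor
  · intro j
    exact add_nonneg (add_nonneg (h.1 j) (mul_nonneg hb (h.1 _))) (mul_nonneg hc (h.1 _))
  · intro p q d hd hqpd hpar
    have g1 := h.g_nonneg p q d (by omega) (by omega) (by omega)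
    have gA := h.g_nonneg (p-1) (q-1) d (by omega) (by omega) (by omega)
    have gB := h.g_nonneg (p-2) (q-2) d (by omega) (by omega) (by omega)
    have gC := h.g_nonneg p (q-1) (d+1) (by omega) (by omega) (by omega)
    have gD := h.g_nonneg (p-1) q (d-1) (by omega) (by omega) (by omega)
    have gE := h.g_nonneg (p-1) (q-2) (d+1) (by omega) (by omega) (by omega)
    have gF := h.g_nonneg (p-2) (q-1) (d-1) (by omega) (by omega) (by omega)
    have gG := h.g_nonneg p (q-2) d (by omega) (by omega) (by omega)
    have gH := h.g_nonneg (p-2) q d (by omega) (by omega) (by omega)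
    simp only
    have e1 : p - 1 - d = p - d - 1 := by ring
    have e2 : q - 1 + d = q + d - 1 := by ring
    have e3 : p - 2 - d = p - d - 2 := by ring
    have e4 : q - 2 + d = q + d - 2 := by ring
    have e5 : p - (d+1) = p - d - 1 := by ring
    have e6 : q - 1 + (d+1) = q + d := by ring
    have e7 : p - 1 - (d-1) = p - d := by ring
    have e8 : q + (d-1) = q + d - 1 := by ring
    have e9 : p - 1 - (d+1) = p - d - 2 := by ring
    have e10 : q - 2 + (d+1) = q + d - 1 := by ring
    have e11 : p - 2 - (d-1) = p - d - 1 := by ring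
    have e12 : q - 1 + (d-1) = q + d - 2 := by ring
    rw [e1, e2] at gA; rw [e3, e4] at gB; rw [e5, e6] at gC; rw [e7, e8] at gD
    rw [e9, e10] at gE; rw [e11, e12] at gF; rw [e4] at gG; rw [e3] at gH
    nlinarith [mul_nonneg (mul_nonneg hb hb) (sub_nonneg.2 gA),
      mul_nonneg (mul_nonneg hc hc) (sub_nonneg.2 gB),
      mul_nonneg hb (sub_nonneg.2 gC), mul_nonneg hb (sub_nonneg.2 gD),
      mul_nonneg (mul_nonneg hb hc) (sub_nonneg.2 gE),
      mul_nonneg (mul_nonneg hb hc) (sub_nonneg.2 gF),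
      mul_nonneg hc (sub_nonneg.2 gG), mul_nonneg hc (sub_nonneg.2 gH)]

open Multiset

lemma esymm_cons_succ (a : ℂ) (t : Multiset ℂ) (k : ℕ) :
    (a ::ₘ t).esymm (k + 1) = t.esymm (k + 1) + a * t.esymm k := by
  rw [Multiset.esymm, Multiset.powersetCard_cons, Multiset.map_add, Multiset.sum_add,
    Multiset.map_map]
  congr 1
  rw [Multiset.esymm, ← Multiset.sum_map_mul_left]
  exact congr_arg _ (Multiset.map_congr rfl fun x _ => by simp [Multiset.prod_cons])

noncomputable def Cseq (s : Multiset ℂ) : ℤ → ℂ :=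
  fun j => if 0 ≤ j then s.esymm j.toNat else 0

lemma Cseq_cons (a : ℂ) (t : Multiset ℂ) (j : ℤ) :
    Cseq (a ::ₘ t) j = Cseq t j + a * Cseq t (j - 1) := by
  unfold Cseq
  rcases lt_trichotomy j 0 with h | h | h
  · rw [if_neg (by omega), if_neg (by omega), if_neg (by omega)]; ring
  · subst h
    rw [if_pos le_rfl, if_pos le_rfl, if_neg (by omega)]
    simp [Multiset.esymm]
  · rw [if_pos (by omega), if_pos (by omega), if_pos (by omega)]
    have hj : j.toNat = (j - 1).toNat + 1 := by omega
    rw [hj, esymm_cons_succ]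

lemma esymm_map_hom (f : ℂ →+* ℂ) (s : Multiset ℂ) (k : ℕ) :
    (s.map f).esymm k = f (s.esymm k) := by
  rw [Multiset.esymm, Multiset.esymm, Multiset.powersetCard_map, Multiset.map_map,
    map_multiset_sum, Multiset.map_map]
  exact congr_arg _ (Multiset.map_congr rfl fun x _ => by simp [map_multiset_prod])

lemma esymm_im_zero {s : Multiset ℂ} (hconj : s.map (starRingEnd ℂ) = s) (k : ℕ) :
    (s.esymm k).im = 0 := by
  have := esymm_map_hom (starRingEnd ℂ) s k
  rw [hconj] at this
  exact Complex.conj_eq_iff_im.mp this.symm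

lemma Cseq_im_zero {s : Multiset ℂ} (hconj : s.map (starRingEnd ℂ) = s) (j : ℤ) :
    (Cseq s j).im = 0 := by
  unfold Cseq
  split
  · exact esymm_im_zero hconj _
  · rfl

lemma Cseq_zero (j : ℤ) : Cseq (0 : Multiset ℂ) j = if j = 0 then 1 else 0 := by
  unfold Cseq
  rcases lt_trichotomy j 0 with h | h | h
  · rw [if_neg (by omega), if_neg (by omega)]
  · subst h; simp [Multiset.esymm]
  · rw [if_pos (by omega), if_neg (by omega)]
    have : j.toNat = (j.toNat - 1) + 1 := by omega
    rw [this]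
    simp [Multiset.esymm, Multiset.powersetCard_zero_right]

lemma good_empty : GoodSeq (fun j => (Cseq (0 : Multiset ℂ) j).re) := by
  have hE : ∀ j : ℤ, (Cseq (0 : Multiset ℂ) j).re = if j = 0 then 1 else 0 := by
    intro j; rw [Cseq_zero]; split <;> simp
  constructor
  · intro j; simp only [hE]; split <;> norm_num
  · intro p q d h1 h2 _
    simp only [hE]
    split_ifs <;> norm_num <;> omega

lemma goodSeq_of_selfConj (s : Multiset ℂ) (hconj : s.map (starRingEnd ℂ) = s)
    (hre : ∀ z ∈ s, 0 ≤ z.re) : GoodSeq (fun j => (Cseq s j).re) := by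
  induction s using Multiset.strongInductionOn with
  | ih s ih =>
  by_cases hs : s = 0
  · subst hs; exact good_empty
  obtain ⟨x, hx⟩ := Multiset.exists_mem_of_ne_zero hs
  by_cases hxr : (starRingEnd ℂ) x = x
  · -- real element
    set t := s.erase x with ht
    have hst : s = x ::ₘ t := (Multiset.cons_erase hx).symm
    have htlt : t < s := by rw [hst]; exact Multiset.lt_cons_self t x
    have htconj : t.map (starRingEnd ℂ) = t := by
      have h2 := hconj
      rw [hst, Multiset.map_cons, hxr] at h2
      exact (Multiset.cons_inj_right x).mp h2
    have htre : ∀ z ∈ t, 0 ≤ z.re := fun z hz =>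
      hre z (by rw [hst]; exact Multiset.mem_cons_of_mem hz)
    have hG := ih t htlt htconj htre
    have him := Cseq_im_zero htconj
    have hxim : x.im = 0 := Complex.conj_eq_iff_im.mp hxr
    have key : (fun j => (Cseq s j).re) =
        fun j => (Cseq t j).re + x.re * (Cseq t (j - 1)).re := by
      funext j
      rw [hst, Cseq_cons, Complex.add_re, Complex.mul_re, him, hxim]
      ring
    rw [key]
    exact hG.linear (hre x hx)
  · -- complex conjugate pair
    have hys : (starRingEnd ℂ) x ∈ s := hconj ▸ Multiset.mem_map_of_mem _ hx
    have hy' : (starRingEnd ℂ) x ∈ s.erase x := (Multiset.mem_erase_of_ne hxr).mpr hys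
    set t := (s.erase x).erase ((starRingEnd ℂ) x) with htdef
    have h1 : s.erase x = (starRingEnd ℂ) x ::ₘ t := (Multiset.cons_erase hy').symm
    have hst : s = x ::ₘ (starRingEnd ℂ) x ::ₘ t := by
      rw [← h1, Multiset.cons_erase hx]
    have htlt : t < s := by
      rw [hst]
      exact (Multiset.lt_cons_self t _).trans (Multiset.lt_cons_self _ x)
    have hconjy : (starRingEnd ℂ) ((starRingEnd ℂ) x) = x := Complex.conj_conj x
    have htconj : t.map (starRingEnd ℂ) = t := by
      have h2 := hconj
      rw [hst, Multiset.map_cons, Multiset.map_cons, hconjy, Multiset.cons_swap] at h2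
      exact (Multiset.cons_inj_right _).mp ((Multiset.cons_inj_right x).mp h2)
    have htre : ∀ z ∈ t, 0 ≤ z.re := fun z hz => hre z (by
      rw [hst]; exact Multiset.mem_cons_of_mem (Multiset.mem_cons_of_mem hz))
    have hG := ih t htlt htconj htre
    have him := Cseq_im_zero htconj
    have hbim : (x + (starRingEnd ℂ) x).im = 0 := by simp
    have hbre : 0 ≤ (x + (starRingEnd ℂ) x).re := by
      simp only [Complex.add_re, Complex.conj_re]
      linarith [hre x hx]
    have hcim : (x * (starRingEnd ℂ) x).im = 0 := by
      simp [Complex.mul_im, Complex.conj_re, Complex.conj_im]; ring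
    have hcre : 0 ≤ (x * (starRingEnd ℂ) x).re := by
      simp only [Complex.mul_re, Complex.conj_re, Complex.conj_im]
      nlinarith [sq_nonneg x.re, sq_nonneg x.im]
    have key : (fun j => (Cseq s j).re) =
        fun j => (Cseq t j).re + (x + (starRingEnd ℂ) x).re * (Cseq t (j - 1)).re
          + (x * (starRingEnd ℂ) x).re * (Cseq t (j - 2)).re := by
      funext j
      have expand : Cseq s j = Cseq t j + (x + (starRingEnd ℂ) x) * Cseq t (j - 1)
          + (x * (starRingEnd ℂ) x) * Cseq t (j - 2) := by
        rw [hst, Cseq_cons, Cseq_cons, Cseq_cons]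
        have : j - 1 - 1 = j - 2 := by ring
        rw [this]; ring
      rw [expand]
      simp only [Complex.add_re, Complex.mul_re, him, hbim, hcim]
      ring
    rw [key]
    exact hG.quadratic hbre hcre

/-- Let `X` be a self-conjugate list (multiset) of `n` complex numbers with
nonnegative real parts; then every `e_j(X)` is real, and for `k, l` of different parity with
`1 ≤ k < l ≤ n − 1`, `e_k(X)·e_l(X) ≥ e_{k−1}(X)·e_{l+1}(X)` as real numbers. -/
theorem newton_like_inequality_different_parity (n : ℕ) (s : Multiset ℂ)
    (hcard : Multiset.card s = n) (hconj : s.map (starRingEnd ℂ) = s)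
    (hre : ∀ z ∈ s, 0 ≤ z.re) (k l : ℕ) (hparity : k % 2 ≠ l % 2)
    (hk : 1 ≤ k) (hkl : k < l) (hl : l ≤ n - 1) :
    (∀ j : ℕ, (s.esymm j).im = 0) ∧
    (s.esymm (k - 1) * s.esymm (l + 1)).re ≤ (s.esymm k * s.esymm l).re := by
  refine ⟨esymm_im_zero hconj, ?_⟩
  have hG := goodSeq_of_selfConj s hconj hre
  have key := hG.2 (k : ℤ) (l : ℤ) 1 le_rfl (by omega) (by omega)
  have him := esymm_im_zero hconj
  have e1 : Cseq s ((k : ℤ) - 1) = s.esymm (k - 1) := by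
    unfold Cseq; rw [if_pos (by omega)]; congr 1 <;> omega
  have e2 : Cseq s ((l : ℤ) + 1) = s.esymm (l + 1) := by
    unfold Cseq; rw [if_pos (by omega)]; congr 1 <;> omega
  have e3 : Cseq s (k : ℤ) = s.esymm k := by
    unfold Cseq; rw [if_pos (by omega)]; congr 1 <;> omega
  have e4 : Cseq s (l : ℤ) = s.esymm l := by
    unfold Cseq; rw [if_pos (by omega)]; congr 1 <;> omega
  simp only [e1, e2, e3, e4] at key
  rw [Complex.mul_re, Complex.mul_re, him, him, him, him]
  simpa using key
end

section
/- Let n ≥ 2, let ρ ≥ 0 be real, and let λ_2, …, λ_n be complex numbers with Re(λ_i) ≤ 0 such that the multiset σ = (ρ, λ_2, …, λ_n) is closed under complex conjugation. Write s_1(σ) = ρ + ∑λ_i and s_2(σ) = ρ² + ∑λ_i² (both real), and suppose s_1(σ)² = n·s_2(σ). Then every entrywise nonnegative n×n real matrix whose characteristic polynomial over ℂ is ∏_{λ ∈ σ}(X − λ) has all diagonal entries equal to s_1(σ)/n. -/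
open Polynomial Matrix

section Aux

variable {m : Type*} [Fintype m] [DecidableEq m]

private lemma charmatrix_map_negX (M : Matrix m m ℂ) :
    (charmatrix M).map (aeval (-X : ℂ[X])) = -charmatrix (-M) := by
  ext i j
  rcases eq_or_ne i j with rfl | h
  · simp [charmatrix_apply_eq, map_sub, sub_eq_add_neg, add_comm]
  · simp [charmatrix_apply_ne _ _ _ h]

private lemma prod_map_neg (s : Multiset ℂ) (f : ℂ → ℂ[X]) :
    (s.map fun a => -(f a)).prod = (-1) ^ Multiset.card s * (s.map f).prod := by
  have : (s.map fun a => -(f a)) = s.map fun a => (-1) * f a :=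
    Multiset.map_congr rfl fun a _ => by rw [neg_eq_neg_one_mul]
  rw [this, Multiset.prod_map_mul]
  congr 1
  rw [Multiset.map_const', Multiset.prod_replicate]

private lemma charpoly_neg_aux (M : Matrix m m ℂ) (s : Multiset ℂ)
    (hcard : Multiset.card s = Fintype.card m)
    (hM : M.charpoly = (s.map fun a => X - C a).prod) :
    (-M).charpoly = (s.map fun a => X + C a).prod := by
  have hdet : aeval (-X : ℂ[X]) M.charpoly
      = (-1) ^ Fintype.card m * (-M).charpoly := by
    rw [Matrix.charpoly, AlgHom.map_det, AlgHom.mapMatrix_apply, charmatrix_map_negX, Matrix.det_neg, Matrix.charpoly]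
  have hprod : aeval (-X : ℂ[X]) M.charpoly
      = (-1) ^ Fintype.card m * (s.map fun a => X + C a).prod := by
    rw [hM, map_multiset_prod, Multiset.map_map]
    have : (s.map fun a => aeval (-X : ℂ[X]) (X - C a))
        = s.map fun a => -(X + C a) := by
      apply Multiset.map_congr rfl
      intro a _
      simp [map_sub]
      ring
    rw [Function.comp_def, this, prod_map_neg, hcard]
  have h := hdet.symm.trans hprod
  have h2 := congrArg (fun p => (-1 : ℂ[X]) ^ Fintype.card m * p) h
  simpa [← mul_assoc, ← mul_pow] using h2

private lemma charmatrix_map_expand (M : Matrix m m ℂ) :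
    (charmatrix M).map (expand ℂ 2)
      = Matrix.scalar m (X ^ 2 : ℂ[X]) - (C : ℂ →+* ℂ[X]).mapMatrix M := by
  ext i j
  rcases eq_or_ne i j with rfl | h
  · simp [charmatrix_apply_eq, map_sub]
  · simp [charmatrix_apply_ne _ _ _ h, Matrix.scalar_apply, Matrix.diagonal_apply_ne _ h]

private lemma charpoly_sq_aux (M : Matrix m m ℂ) (s : Multiset ℂ)
    (hcard : Multiset.card s = Fintype.card m)
    (hM : M.charpoly = (s.map fun a => X - C a).prod) :
    (M * M).charpoly = (s.map fun a => X - C (a ^ 2)).prod := by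
  apply expand_injective (two_pos)
  have hfactor : Matrix.scalar m (X ^ 2 : ℂ[X]) - (C : ℂ →+* ℂ[X]).mapMatrix (M * M)
      = charmatrix M * charmatrix (-M) := by
    have hcomm : Commute (Matrix.scalar m (X : ℂ[X])) ((C : ℂ →+* ℂ[X]).mapMatrix M) :=
      Matrix.scalar_commute _ (fun r' => Commute.all _ _) _
    have : charmatrix (-M) = Matrix.scalar m (X : ℂ[X]) + (C : ℂ →+* ℂ[X]).mapMatrix M := by
      rw [charmatrix, map_neg, sub_neg_eq_add]
    rw [this, charmatrix]
    rw [sub_mul, mul_add, mul_add]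
    rw [← hcomm.eq]
    have hXX : Matrix.scalar m (X : ℂ[X]) * Matrix.scalar m (X : ℂ[X])
        = Matrix.scalar m (X ^ 2 : ℂ[X]) := by
      rw [← _root_.map_mul, sq]
    have hMM : (C : ℂ →+* ℂ[X]).mapMatrix M * (C : ℂ →+* ℂ[X]).mapMatrix M
        = (C : ℂ →+* ℂ[X]).mapMatrix (M * M) := by
      rw [← _root_.map_mul]
    rw [hXX, hMM]
    abel
  have lhs : expand ℂ 2 ((M * M).charpoly) = M.charpoly * (-M).charpoly := by
    rw [Matrix.charpoly, AlgHom.map_det, AlgHom.mapMatrix_apply, charmatrix_map_expand, hfactor, Matrix.det_mul,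
      Matrix.charpoly, Matrix.charpoly]
  rw [lhs, hM, charpoly_neg_aux M s hcard hM, map_multiset_prod, Multiset.map_map,
    ← Multiset.prod_map_mul]
  congr 1
  apply Multiset.map_congr rfl
  intro a _
  simp only [Function.comp_apply, map_sub, expand_X, expand_C]
  rw [C_pow]
  ring

/-- If the characteristic polynomial of a complex matrix splits with root multiset `s`, then
the trace of `M * M` is the sum of squares of elements of `s`. -/
private lemma trace_sq_eq (M : Matrix m m ℂ) (s : Multiset ℂ)
    (hcard : Multiset.card s = Fintype.card m)
    (hM : M.charpoly = (s.map fun a => X - C a).prod) :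
    (M * M).trace = (s.map fun a => a ^ 2).sum ∧ M.trace = s.sum := by
  constructor
  · rw [Matrix.trace_eq_sum_roots_charpoly, charpoly_sq_aux M s hcard hM]
    have : (s.map fun a => X - C (a ^ 2)) = ((s.map fun a => a ^ 2).map fun b => X - C b) := by
      rw [Multiset.map_map]; rfl
    rw [this, roots_multiset_prod_X_sub_C]
  · rw [Matrix.trace_eq_sum_roots_charpoly, hM, roots_multiset_prod_X_sub_C]

end Aux

/-- Let `σ = (ρ, λ_2, …, λ_n)` be a self-conjugate list with `ρ ≥ 0` and
`Re λ_i ≤ 0`, and suppose equality holds in the JLL condition: `s_1(σ)² = n·s_2(σ)`. Then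
every entrywise nonnegative matrix realising `σ` has all diagonal entries equal to
`s_1(σ)/n`. -/
theorem constant_diagonal_of_JLL_equality (n : ℕ) (hn : 2 ≤ n) (ρ : ℝ) (hρ : 0 ≤ ρ)
    (l : ℕ → ℂ) (hRe : ∀ i ∈ Finset.Icc 2 n, (l i).re ≤ 0)
    (hconj : ((ρ : ℂ) ::ₘ (Finset.Icc 2 n).val.map l).map (starRingEnd ℂ) =
      (ρ : ℂ) ::ₘ (Finset.Icc 2 n).val.map l)
    (hJLL : ((ρ : ℂ) + ∑ i ∈ Finset.Icc 2 n, l i).re ^ 2 =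
      (n : ℝ) * ((ρ : ℂ) ^ 2 + ∑ i ∈ Finset.Icc 2 n, (l i) ^ 2).re) :
    ∀ A : Matrix (Fin n) (Fin n) ℝ, (∀ i j, 0 ≤ A i j) →
      A.charpoly.map (algebraMap ℝ ℂ) =
        (X - C (ρ : ℂ)) * ∏ i ∈ Finset.Icc 2 n, (X - C (l i)) →
      ∀ i : Fin n, A i i = ((ρ : ℂ) + ∑ i ∈ Finset.Icc 2 n, l i).re / n := by
  intro A hA hchar i
  set σ : Multiset ℂ := (ρ : ℂ) ::ₘ (Finset.Icc 2 n).val.map l with hσ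
  set B : Matrix (Fin n) (Fin n) ℂ := A.map (algebraMap ℝ ℂ) with hB
  have hcard : Multiset.card σ = Fintype.card (Fin n) := by
    rw [hσ, Multiset.card_cons, Multiset.card_map]
    simp only [Finset.card_val, Nat.card_Icc, Fintype.card_fin]
    omega
  have hBchar : B.charpoly = (σ.map fun a => X - C a).prod := by
    rw [hB, Matrix.charpoly_map, hchar, hσ, Multiset.map_cons, Multiset.prod_cons,
      Multiset.map_map, Finset.prod_eq_multiset_prod]
    rfl
  obtain ⟨htr2, htr1⟩ := trace_sq_eq B σ hcard hBchar
  -- trace of B in terms of trace of A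
  have hBtrace : B.trace = ((A.trace : ℝ) : ℂ) := by
    simp [hB, Matrix.trace, Matrix.map_apply, Matrix.diag]
  have hB2trace : (B * B).trace = (((A * A).trace : ℝ) : ℂ) := by
    have : B * B = (A * A).map (algebraMap ℝ ℂ) := by
      rw [hB, Matrix.map_mul]
    rw [this]
    simp [Matrix.trace, Matrix.map_apply, Matrix.diag]
  have hσsum : σ.sum = (ρ : ℂ) + ∑ i ∈ Finset.Icc 2 n, l i := by
    rw [hσ, Multiset.sum_cons, Finset.sum_eq_multiset_sum]
  have hσsum2 : (σ.map fun a => a ^ 2).sum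
      = (ρ : ℂ) ^ 2 + ∑ i ∈ Finset.Icc 2 n, (l i) ^ 2 := by
    rw [hσ, Multiset.map_cons, Multiset.sum_cons, Multiset.map_map, Finset.sum_eq_multiset_sum]
    rfl
  -- Real identities
  have hs1 : ((ρ : ℂ) + ∑ i ∈ Finset.Icc 2 n, l i).re = A.trace := by
    rw [← hσsum, ← htr1, hBtrace, Complex.ofReal_re]
  have hs2 : ((ρ : ℂ) ^ 2 + ∑ i ∈ Finset.Icc 2 n, (l i) ^ 2).re = (A * A).trace := by
    rw [← hσsum2, ← htr2, hB2trace, Complex.ofReal_re]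
  rw [hs1] at hJLL ⊢
  rw [hs2] at hJLL
  -- Now the purely real argument
  have hn0 : (0 : ℝ) < n := by positivity
  set t : ℝ := A.trace with ht
  have htsum : t = ∑ j : Fin n, A j j := by
    rw [ht, Matrix.trace]; rfl
  -- trace (A*A) ≥ ∑ (A i i)^2
  have hdiag_le : ∑ j : Fin n, (A j j) ^ 2 ≤ (A * A).trace := by
    rw [Matrix.trace]
    apply Finset.sum_le_sum
    intro j _
    rw [Matrix.diag_apply, Matrix.mul_apply]
    rw [pow_two]
    exact Finset.single_le_sum (f := fun k => A j k * A k j)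
      (fun k _ => mul_nonneg (hA j k) (hA k j)) (Finset.mem_univ j)
  -- Cauchy–Schwarz
  have hCS : (∑ j : Fin n, A j j) ^ 2 ≤ (n : ℝ) * ∑ j : Fin n, (A j j) ^ 2 := by
    have := sq_sum_le_card_mul_sum_sq (s := (Finset.univ : Finset (Fin n)))
      (f := fun j => A j j)
    simpa using this
  have hsq_eq : (n : ℝ) * ∑ j : Fin n, (A j j) ^ 2 = t ^ 2 := by
    have h1 : t ^ 2 ≤ (n : ℝ) * ∑ j : Fin n, (A j j) ^ 2 := by rw [htsum]; exact hCS
    have h2 : (n : ℝ) * ∑ j : Fin n, (A j j) ^ 2 ≤ t ^ 2 := by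
      rw [hJLL]
      exact mul_le_mul_of_nonneg_left hdiag_le (le_of_lt hn0)
    linarith
  -- Equality in Cauchy–Schwarz forces constant diagonal
  have hne : (n : ℝ) ≠ 0 := ne_of_gt hn0
  have hsum_sq : ∑ j : Fin n, (A j j) ^ 2 = t ^ 2 / n := by
    rw [eq_div_iff hne, mul_comm]
    exact hsq_eq
  have hzero : ∑ j : Fin n, (A j j - t / n) ^ 2 = 0 := by
    have h1 : ∑ j : Fin n, (A j j - t / n) ^ 2
        = (∑ j : Fin n, (A j j) ^ 2) - (2 * (t / n)) * (∑ j : Fin n, A j j)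
          + (n : ℝ) * (t / n) ^ 2 := by
      rw [Finset.sum_congr rfl
        (fun j _ => by ring :
          ∀ j ∈ (Finset.univ : Finset (Fin n)), (A j j - t / n) ^ 2
            = (A j j ^ 2 - (2 * (t / n)) * A j j) + (t / n) ^ 2),
        Finset.sum_add_distrib, Finset.sum_sub_distrib, ← Finset.mul_sum, Finset.sum_const,
        Finset.card_univ, Fintype.card_fin, nsmul_eq_mul]
    rw [h1, ← htsum, hsum_sq]
    field_simp
    ring
  have hterm : (A i i - t / n) ^ 2 = 0 := by
    have := (Finset.sum_eq_zero_iff_of_nonneg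
      (fun j _ => sq_nonneg (A j j - t / n))).mp hzero i (Finset.mem_univ i)
    exact this
  have h0 : A i i - t / n = 0 := pow_eq_zero_iff two_ne_zero |>.mp hterm
  linarith [h0]
end

section
/- Let A be an n×n entrywise nonnegative real matrix. Then for all positive integers k and m, (trace(A^k))^m ≤ n^{m−1} · trace(A^{km}). -/
lemma pow_entry_nonneg {n : ℕ} (B : Matrix (Fin n) (Fin n) ℝ) (hB : ∀ i j, 0 ≤ B i j)
    (m : ℕ) : ∀ i j, 0 ≤ (B ^ m) i j := by
  induction m with
  | zero => intro i j; simp [Matrix.one_apply]; positivity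
  | succ m ih =>
      intro i j
      rw [pow_succ, Matrix.mul_apply]
      exact Finset.sum_nonneg fun l _ => mul_nonneg (ih i l) (hB l j)

lemma diag_pow_le {n : ℕ} (B : Matrix (Fin n) (Fin n) ℝ) (hB : ∀ i j, 0 ≤ B i j)
    (m : ℕ) (hm : 1 ≤ m) (i : Fin n) : (B i i) ^ m ≤ (B ^ m) i i := by
  induction m with
  | zero => omega
  | succ m ih =>
      rcases Nat.eq_or_lt_of_le hm with h | h
      · simp [← h]
      · have hm' : 1 ≤ m := by omega
        calc (B i i) ^ (m + 1) = (B i i) ^ m * B i i := pow_succ _ _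
          _ ≤ (B ^ m) i i * B i i := by
              exact mul_le_mul_of_nonneg_right (ih hm') (hB i i)
          _ ≤ ∑ l, (B ^ m) i l * B l i := by
              apply Finset.single_le_sum (f := fun l => (B ^ m) i l * B l i)
                (fun l _ => mul_nonneg (pow_entry_nonneg B hB m i l) (hB l i))
                (Finset.mem_univ i)
          _ = (B ^ (m + 1)) i i := by rw [pow_succ, Matrix.mul_apply]

/-- JLL conditions. For an `n × n` entrywise nonnegative real matrix `A`
and all positive integers `k` and `m`, `(trace(A^k))^m ≤ n^{m−1} · trace(A^{km})`. -/
theorem JLL_conditions {n : ℕ} (A : Matrix (Fin n) (Fin n) ℝ) (hA : ∀ i j, 0 ≤ A i j) :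
    ∀ k m : ℕ, 1 ≤ k → 1 ≤ m →
      ((A ^ k).trace) ^ m ≤ (n : ℝ) ^ (m - 1) * (A ^ (k * m)).trace := by
  intro k m hk hm
  set B := A ^ k with hBdef
  have hB : ∀ i j, 0 ≤ B i j := pow_entry_nonneg A hA k
  have hkm : A ^ (k * m) = B ^ m := by rw [hBdef, ← pow_mul]
  rw [hkm]
  obtain ⟨m', rfl⟩ : ∃ m', m = m' + 1 := ⟨m - 1, by omega⟩
  have h1 : (B.trace) ^ (m' + 1) ≤ (n : ℝ) ^ m' * ∑ i, (B i i) ^ (m' + 1) := by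
    have := pow_sum_le_card_mul_sum_pow (s := (Finset.univ : Finset (Fin n)))
      (f := fun i => B i i) (fun i _ => hB i i) m'
    simpa [Matrix.trace, Matrix.diag] using this
  have h2 : ∑ i, (B i i) ^ (m' + 1) ≤ (B ^ (m' + 1)).trace := by
    apply Finset.sum_le_sum
    intro i _
    exact diag_pow_le B hB (m' + 1) (by omega) i
  calc (B.trace) ^ (m' + 1) ≤ (n : ℝ) ^ m' * ∑ i, (B i i) ^ (m' + 1) := h1
    _ ≤ (n : ℝ) ^ m' * (B ^ (m' + 1)).trace := by
        apply mul_le_mul_of_nonneg_left h2 (by positivity)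
    _ = (n : ℝ) ^ (m' + 1 - 1) * (B ^ (m' + 1)).trace := by norm_num
end

section
/- Let ρ ≥ 0 be real, let λ_2, …, λ_m be complex numbers such that there exists an entrywise nonnegative m×m real matrix whose characteristic polynomial over ℂ is (X − ρ)·∏_{i=2}^{m}(X − λ_i) with ρ the Perron eigenvalue (i.e., ρ ≥ |λ_i| for all i). Let μ_1, …, μ_n be complex numbers such that there exists an entrywise nonnegative n×n real matrix B whose characteristic polynomial over ℂ is ∏_{j=1}^{n}(X − μ_j) and which has some diagonal entry greater than or equal to ρ. Then there exists an entrywise nonnegative (n + m − 1)×(n + m − 1) real matrix whose characteristic polynomial over ℂ is ∏_{j=1}^{n}(X − μ_j) · ∏_{i=2}^{m}(X − λ_i). -/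
/-
Let `u ≥ 0` be a Perron eigenvector of `A` (so `A u = ρ u`) and `y ≥ 0` with `y ⬝ᵥ u = 1`.
Move the diagonal entry `b = B k k ≥ ρ` of `B` to the last position, `B = [[B₁, c], [dᵀ, b]]`.
Šmigoc's matrix `C = [[B₁, c yᵀ], [u dᵀ, A + (b - ρ) u yᵀ]]` is nonnegative because `b ≥ ρ`.
Taking the Schur complement of `t - B₁` in `t - C` leaves `(t - A) - u g yᵀ` for a scalar `g`, and
since `(t - A) u = (t - ρ) u` the Weinstein–Aronszajn identity gives
`det (t - C) · (t - ρ) = det (t - A) · det (t - B)`.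

The Perron eigenvector itself comes from the resolvent: as no real eigenvalue of `A` exceeds `ρ`,
`(t - A)⁻¹ ≥ 0` for every `t > ρ` (a Neumann series for large `t`, carried down to `ρ` by the
resolvent identity), and a limit point of the normalised resolvents as `t ↓ ρ` is a nonnegative
`P ≠ 0` with `(ρ - A) P = 0`.
-/

open Polynomial Filter Topology

namespace Matrix

theorem mul_apply_nonneg {R : Type*} [Semiring R] [PartialOrder R] [IsOrderedRing R]
    {κ ι μ : Type*} [Fintype ι] {M : Matrix κ ι R} {N : Matrix ι μ R}
    (hM : ∀ i j, 0 ≤ M i j) (hN : ∀ i j, 0 ≤ N i j) (i : κ) (k : μ) : 0 ≤ (M * N) i k :=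
  Finset.sum_nonneg fun j _ => mul_nonneg (hM i j) (hN j k)

section Perron

variable {ι : Type*} [Fintype ι] [DecidableEq ι]

section Resolvent

attribute [local instance] Matrix.linftyOpNormedRing Matrix.linftyOpNormedAlgebra

theorem inv_one_sub_apply_nonneg {E : Matrix ι ι ℝ} (hE : ∀ i j, 0 ≤ E i j) (hE1 : ‖E‖ < 1)
    (i j : ι) : 0 ≤ (1 - E)⁻¹ i j := by
  have hsum : HasSum (fun n => (E ^ n) i j) ((∑' n, E ^ n) i j) :=
    Pi.hasSum.1 (Pi.hasSum.1 (summable_geometric_of_norm_lt_one hE1).hasSum i) j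
  rw [inv_eq_left_inv (geom_series_mul_neg E hE1)]
  exact hsum.nonneg fun n => pow_apply_nonneg hE n i j

theorem inv_scalar_sub_apply_nonneg_of_norm_lt {A : Matrix ι ι ℝ} (hA : ∀ i j, 0 ≤ A i j) {t : ℝ}
    (ht : ‖A‖ < t) (i j : ι) : 0 ≤ (scalar ι t - A)⁻¹ i j := by
  have ht0 : 0 < t := (norm_nonneg A).trans_lt ht
  have hsplit : scalar ι t - A = scalar ι t * (1 - t⁻¹ • A) := by
    rw [Matrix.mul_sub, Matrix.mul_one, scalar_apply, ← smul_eq_diagonal_mul, smul_smul,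
      mul_inv_cancel₀ ht0.ne', one_smul]
  have hinv : (scalar ι t)⁻¹ = scalar ι t⁻¹ :=
    inv_eq_left_inv (by rw [← map_mul, inv_mul_cancel₀ ht0.ne', map_one])
  rw [hsplit, mul_inv_rev, hinv]
  refine mul_apply_nonneg (inv_one_sub_apply_nonneg (fun i j => ?_) ?_) (fun i j => ?_) i j
  · exact mul_nonneg (inv_nonneg.2 ht0.le) (hA i j)
  · rwa [norm_smul, norm_inv, Real.norm_of_nonneg ht0.le, inv_mul_lt_one₀ ht0]
  · by_cases h : i = j <;> simp [scalar_apply, h, ht0.le]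

theorem inv_scalar_sub_apply_nonneg_of_le {A : Matrix ι ι ℝ} {t t' : ℝ}
    (hR : ∀ i j, 0 ≤ (scalar ι t - A)⁻¹ i j) (hdet : IsUnit (scalar ι t - A).det) (htt' : t' ≤ t)
    (hδ : (t - t') * ‖(scalar ι t - A)⁻¹‖ < 1) (i j : ι) : 0 ≤ (scalar ι t' - A)⁻¹ i j := by
  have hsplit : scalar ι t' - A = (scalar ι t - A) * (1 - (t - t') • (scalar ι t - A)⁻¹) := by
    rw [Matrix.mul_sub, Matrix.mul_one, Matrix.mul_smul, mul_nonsing_inv _ hdet, sub_sub,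
      add_comm, ← sub_sub, smul_one_eq_diagonal, scalar_apply, scalar_apply, diagonal_sub,
      sub_sub_cancel]
  rw [hsplit, mul_inv_rev]
  refine mul_apply_nonneg (inv_one_sub_apply_nonneg (fun i j => ?_) ?_) hR i j
  · exact mul_nonneg (sub_nonneg.2 htt') (hR i j)
  · rwa [norm_smul, Real.norm_of_nonneg (sub_nonneg.2 htt')]

theorem continuousAt_inv_scalar_sub {A : Matrix ι ι ℝ} {s : ℝ}
    (hs : IsUnit (scalar ι s - A).det) : ContinuousAt (fun r => (scalar ι r - A)⁻¹) s := by
  have hinv : ContinuousAt Ring.inverse (scalar ι s - A).det := by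
    simpa using NormedRing.inverse_continuousAt hs.unit
  have hsub : Continuous fun r : ℝ => scalar ι r - A := by
    simp only [scalar_apply]
    fun_prop
  exact ContinuousAt.comp (f := fun r : ℝ => scalar ι r - A) (continuousAt_matrix_inv _ hinv)
    hsub.continuousAt

theorem inv_scalar_sub_apply_nonneg {A : Matrix ι ι ℝ} (hA : ∀ i j, 0 ≤ A i j) {ρ : ℝ}
    (hdet : ∀ t, ρ < t → IsUnit (scalar ι t - A).det) {t : ℝ} (ht : ρ < t) (i j : ι) :
    0 ≤ (scalar ι t - A)⁻¹ i j := by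
  set t₀ := max t (‖A‖ + 1)
  have hcont : ContinuousOn (fun s => (scalar ι s - A)⁻¹) (Set.Icc t t₀) := fun s hs =>
    (continuousAt_inv_scalar_sub (hdet s (ht.trans_le hs.1))).continuousWithinAt
  obtain ⟨K, hK⟩ := isCompact_Icc.exists_bound_of_continuousOn hcont
  have hK0 : 0 ≤ K := (norm_nonneg _).trans (hK t ⟨le_rfl, le_max_left _ _⟩)
  set δ := (K + 1)⁻¹
  have hδ0 : 0 < δ := by positivity
  have hδK : δ * K < 1 := by
    rw [inv_mul_lt_one₀ (by positivity)]
    linarith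
  -- Resolvents on `[t, t₀]` have norm at most `K`, so steps of length `δ < 1 / K` stay within
  -- the radius of the Neumann series.
  have hdescend : ∀ k : ℕ, ∀ s ∈ Set.Icc t t₀, t₀ - s ≤ k * δ →
      ∀ i j, 0 ≤ (scalar ι s - A)⁻¹ i j := by
    intro k
    induction k with
    | zero =>
      intro s hs hs₀
      refine inv_scalar_sub_apply_nonneg_of_norm_lt hA ?_
      have := le_max_right t (‖A‖ + 1)
      push_cast at hs₀
      linarith
    | succ k ih =>
      intro s hs hs₀
      obtain ⟨s', hs', hss', hs'δ, hs'₀⟩ :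
          ∃ s' ∈ Set.Icc t t₀, s ≤ s' ∧ s' ≤ s + δ ∧ t₀ - s' ≤ k * δ := by
        push_cast at hs₀
        rcases le_total (s + δ) t₀ with h | h
        · exact ⟨s + δ, ⟨by linarith [hs.1], h⟩, by linarith, le_rfl, by linarith⟩
        · exact ⟨t₀, ⟨le_max_left _ _, le_rfl⟩, hs.2, h, by rw [sub_self]; positivity⟩
      refine inv_scalar_sub_apply_nonneg_of_le (ih s' hs' hs'₀) (hdet s' (ht.trans_le hs'.1))
        hss' ?_
      calc (s' - s) * ‖(scalar ι s' - A)⁻¹‖ ≤ δ * K :=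
            mul_le_mul (by linarith) (hK s' hs') (norm_nonneg _) hδ0.le
        _ < 1 := hδK
  obtain ⟨k, hk⟩ := exists_nat_ge ((t₀ - t) / δ)
  exact hdescend k t ⟨le_rfl, le_max_left _ _⟩ (by rwa [div_le_iff₀ hδ0] at hk) i j

end Resolvent

theorem exists_normalized_resolvent {A : Matrix ι ι ℝ} (hA : ∀ i j, 0 ≤ A i j) {ρ : ℝ}
    (hdet : ∀ t, ρ < t → IsUnit (scalar ι t - A).det) {t : ℝ} (ht : ρ < t) :
    ∃ P : Matrix ι ι ℝ, ∃ ε : ℝ, ((∀ i j, P i j ∈ Set.Icc 0 1) ∧ ε ∈ Set.Icc 0 1) ∧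
      (scalar ι t - A) * P = ε • 1 ∧ ∑ i, ∑ j, P i j + ε = 1 := by
  set R := (scalar ι t - A)⁻¹
  have hR : ∀ i j, 0 ≤ R i j := inv_scalar_sub_apply_nonneg hA hdet ht
  set σ := ∑ i, ∑ j, R i j
  have hσ : 0 ≤ σ := Finset.sum_nonneg fun i _ => Finset.sum_nonneg fun j _ => hR i j
  have hσ1 : 0 < 1 + σ := by linarith
  refine ⟨(1 + σ)⁻¹ • R, (1 + σ)⁻¹, ⟨fun i j => ⟨?_, ?_⟩, ?_, ?_⟩, ?_, ?_⟩
  · exact mul_nonneg (inv_nonneg.2 hσ1.le) (hR i j)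
  · have hij : R i j ≤ σ :=
      (Finset.single_le_sum (fun j _ => hR i j) (Finset.mem_univ j)).trans
        (Finset.single_le_sum (f := fun i => ∑ j, R i j)
          (fun i _ => Finset.sum_nonneg fun j _ => hR i j) (Finset.mem_univ i))
    show (1 + σ)⁻¹ * R i j ≤ 1
    rw [inv_mul_le_one₀ hσ1]
    linarith
  · exact inv_nonneg.2 hσ1.le
  · exact inv_le_one_of_one_le₀ (by linarith)
  · rw [Matrix.mul_smul, mul_nonsing_inv _ (hdet t ht)]
  · simp only [smul_apply, smul_eq_mul, ← Finset.mul_sum]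
    field_simp
    ring

theorem exists_nonneg_mul_eq_zero {A : Matrix ι ι ℝ} (hA : ∀ i j, 0 ≤ A i j) {ρ : ℝ}
    (hdet : ∀ t, ρ < t → IsUnit (scalar ι t - A).det) (hρ : (scalar ι ρ - A).det = 0) :
    ∃ P : Matrix ι ι ℝ, (∀ i j, 0 ≤ P i j) ∧ ∑ i, ∑ j, P i j = 1 ∧ (scalar ι ρ - A) * P = 0 := by
  set t : ℕ → ℝ := fun k => ρ + 1 / (k + 1)
  have ht : ∀ k, ρ < t k := fun k => by
    simp only [t]; linarith [Nat.one_div_pos_of_nat (α := ℝ) (n := k)]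
  have ht_lim : Tendsto t atTop (𝓝 ρ) := by
    simpa [t] using (tendsto_one_div_add_atTop_nhds_zero_nat (𝕜 := ℝ)).const_add ρ
  choose P ε hPS hPF using fun k => exists_normalized_resolvent hA hdet (ht k)
  set S : Set (Matrix ι ι ℝ × ℝ) :=
    (Set.univ.pi fun _ => Set.univ.pi fun _ => Set.Icc 0 1) ×ˢ Set.Icc 0 1
  have hS : IsCompact S :=
    (isCompact_univ_pi fun _ => isCompact_univ_pi fun _ => isCompact_Icc).prod isCompact_Icc
  have : FirstCountableTopology (Matrix ι ι ℝ) :=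
    inferInstanceAs (FirstCountableTopology (ι → ι → ℝ))
  obtain ⟨⟨P₀, ε₀⟩, hP₀, φ, hφ, hlim⟩ :=
    hS.tendsto_subseq (x := fun k => (P k, ε k)) fun k => ⟨fun i _ j _ => (hPS k).1 i j, (hPS k).2⟩
  set F : Set (ℝ × Matrix ι ι ℝ × ℝ) :=
    {x | (scalar ι x.1 - A) * x.2.1 = x.2.2 • 1 ∧ ∑ i, ∑ j, x.2.1 i j + x.2.2 = 1}
  have hF : IsClosed F := by
    refine (isClosed_eq ?_ (by fun_prop)).inter (isClosed_eq (by fun_prop) (by fun_prop))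
    simp only [scalar_apply]
    fun_prop
  have hP₀F : (ρ, P₀, ε₀) ∈ F := hF.mem_of_tendsto
    ((ht_lim.comp hφ.tendsto_atTop).prodMk_nhds hlim) (Eventually.of_forall fun k => hPF (φ k))
  have hε₀ : ε₀ = 0 := by
    have := congrArg det hP₀F.1
    rw [det_mul, hρ, zero_mul, det_smul, det_one, mul_one] at this
    exact (pow_eq_zero_iff'.1 this.symm).1
  refine ⟨P₀, fun i j => (hP₀.1 i trivial j trivial).1, ?_, ?_⟩
  · simpa [hε₀] using hP₀F.2
  · rw [hP₀F.1, hε₀, zero_smul]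

theorem exists_nonneg_eigenvector {A : Matrix ι ι ℝ} (hA : ∀ i j, 0 ≤ A i j) {ρ : ℝ}
    (hdet : ∀ t, ρ < t → IsUnit (scalar ι t - A).det) (hρ : (scalar ι ρ - A).det = 0) :
    ∃ u : ι → ℝ, (∀ i, 0 ≤ u i) ∧ u ≠ 0 ∧ A *ᵥ u = ρ • u := by
  obtain ⟨P, hP, hP1, hPρ⟩ := exists_nonneg_mul_eq_zero hA hdet hρ
  refine ⟨P *ᵥ 1, fun i => Finset.sum_nonneg fun j _ => by simpa using hP i j, fun h => ?_, ?_⟩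
  · have h0 : ∑ i, (P *ᵥ 1) i = 0 := by simp [h]
    simp [mulVec, dotProduct, hP1] at h0
  · have := congrArg (· *ᵥ (1 : ι → ℝ)) hPρ
    simp only [← mulVec_mulVec, sub_mulVec, zero_mulVec, sub_eq_zero] at this
    rw [← this]
    ext i
    simp [mulVec_diagonal]

theorem exists_nonneg_eigenvector_of_charpoly_eq {α : Type*} {A : Matrix ι ι ℝ}
    (hA : ∀ i j, 0 ≤ A i j) {ρ : ℝ} {s : Finset α} {l : α → ℂ} (hl : ∀ i ∈ s, ‖l i‖ ≤ ρ)
    (hcp : A.charpoly.map (algebraMap ℝ ℂ) = (X - C (ρ : ℂ)) * ∏ i ∈ s, (X - C (l i))) :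
    ∃ u : ι → ℝ, (∀ i, 0 ≤ u i) ∧ u ≠ 0 ∧ A *ᵥ u = ρ • u := by
  have hroot (t : ℝ) :
      (A.charpoly.map (algebraMap ℝ ℂ)).IsRoot (t : ℂ) ↔ (scalar ι t - A).det = 0 := by
    rw [← eval_charpoly]; exact isRoot_map_iff (algebraMap ℝ ℂ).injective
  refine exists_nonneg_eigenvector hA (fun t ht => isUnit_iff_ne_zero.2 fun h0 => ?_)
    ((hroot ρ).1 (by simp [hcp]))
  rw [← hroot, hcp, IsRoot, eval_mul, eval_prod, mul_eq_zero, Finset.prod_eq_zero_iff] at h0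
  rcases h0 with h | ⟨i, hi, h⟩
  · simp [sub_eq_zero] at h
    linarith
  · have := hl i hi
    simp only [eval_sub, eval_X, eval_C, sub_eq_zero] at h
    rw [← h, Complex.norm_real, Real.norm_eq_abs] at this
    linarith [le_abs_self t]

end Perron

theorem exists_nonneg_dotProduct_eq_one {K ι : Type*} [Field K] [LinearOrder K]
    [IsStrictOrderedRing K] [Fintype ι] [DecidableEq ι] {u : ι → K} (hu0 : ∀ i, 0 ≤ u i)
    (hu : u ≠ 0) : ∃ y : ι → K, (∀ i, 0 ≤ y i) ∧ y ⬝ᵥ u = 1 := by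
  obtain ⟨j, hj⟩ := Function.ne_iff.1 hu
  have hj : 0 < u j := (hu0 j).lt_of_ne' hj
  refine ⟨Pi.single j (u j)⁻¹, fun i => ?_, by simp [hj.ne']⟩
  simp only [Pi.single_apply]
  split_ifs <;> positivity

/-- Šmigoc's gluing of `B` and `A` along `U`, where `A U = U D` and `Y U = 1`. For `τ = Unit`,
`D = ρ`, `U = u`, `Y = yᵀ` and `B = [[B₁, c], [dᵀ, b]]` this is
`[[B₁, c yᵀ], [u dᵀ, A + (b - ρ) u yᵀ]]`. -/
def smigocGlue {R : Type*} [Ring R] {κ ι τ : Type*} [Fintype τ] (B : Matrix (κ ⊕ τ) (κ ⊕ τ) R)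
    (A : Matrix ι ι R) (D : Matrix τ τ R) (U : Matrix ι τ R) (Y : Matrix τ ι R) :
    Matrix (κ ⊕ ι) (κ ⊕ ι) R :=
  fromBlocks B.toBlocks₁₁ (B.toBlocks₁₂ * Y) (U * B.toBlocks₂₁) (A + U * (B.toBlocks₂₂ - D) * Y)

theorem smigocGlue_nonneg {R : Type*} [Ring R] [PartialOrder R] [IsOrderedRing R]
    {κ ι τ : Type*} [Fintype τ] {B : Matrix (κ ⊕ τ) (κ ⊕ τ) R} {A : Matrix ι ι R}
    {D : Matrix τ τ R} {U : Matrix ι τ R} {Y : Matrix τ ι R} (hB : ∀ i j, 0 ≤ B i j)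
    (hA : ∀ i j, 0 ≤ A i j) (hU : ∀ i j, 0 ≤ U i j) (hY : ∀ i j, 0 ≤ Y i j)
    (hD : ∀ i j, D i j ≤ B (.inr i) (.inr j)) : ∀ i j, 0 ≤ smigocGlue B A D U Y i j := by
  rintro (i | i) (j | j) <;> simp only [smigocGlue, fromBlocks_apply₁₁, fromBlocks_apply₁₂,
    fromBlocks_apply₂₁, fromBlocks_apply₂₂]
  · exact hB _ _
  · exact mul_apply_nonneg (fun _ _ => hB _ _) hY i j
  · exact mul_apply_nonneg hU (fun _ _ => hB _ _) i j
  · exact add_nonneg (hA i j) (mul_apply_nonneg (mul_apply_nonneg hU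
      (fun a b => sub_nonneg.2 (hD a b))) hY i j)

theorem scalar_sub_fromBlocks {R : Type*} [Ring R] {α β : Type*} [Fintype α] [DecidableEq α]
    [Fintype β] [DecidableEq β] (t : R) (P : Matrix α α R) (Q : Matrix α β R)
    (S : Matrix β α R) (T : Matrix β β R) :
    scalar (α ⊕ β) t - fromBlocks P Q S T =
      fromBlocks (scalar α t - P) (-Q) (-S) (scalar β t - T) := by
  ext (i | i) (j | j) <;> simp [diagonal_apply]

section Field

variable {K : Type*} [Field K] {ι κ τ : Type*} [Fintype ι] [DecidableEq ι] [Fintype κ]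
  [DecidableEq κ] [Fintype τ] [DecidableEq τ]

theorem det_sub_mul_mul_mul_det {M : Matrix ι ι K} {N G : Matrix τ τ K} {U : Matrix ι τ K}
    {Y : Matrix τ ι K} (hM : IsUnit M.det) (hMU : M * U = U * N) (hYU : Y * U = 1) :
    (M - U * G * Y).det * N.det = M.det * (N - G).det := by
  have hNinv : N⁻¹ = Y * M⁻¹ * U := inv_eq_left_inv <| by
    rw [Matrix.mul_assoc, ← hMU, ← Matrix.mul_assoc, Matrix.mul_assoc Y, nonsing_inv_mul _ hM,
      Matrix.mul_one, hYU]
  have hN : N⁻¹ * N = 1 := by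
    rw [hNinv, Matrix.mul_assoc, ← hMU, ← Matrix.mul_assoc, Matrix.mul_assoc Y,
      nonsing_inv_mul _ hM, Matrix.mul_one, hYU]
  calc (M - U * G * Y).det * N.det = M.det * ((1 - G * N⁻¹) * N).det := by
        rw [sub_eq_add_neg, Matrix.mul_assoc, ← Matrix.mul_neg, det_add_mul _ _ hM, det_mul,
          hNinv, Matrix.neg_mul, Matrix.neg_mul, Matrix.mul_assoc G, Matrix.mul_assoc G,
          ← sub_eq_add_neg, mul_assoc]
    _ = M.det * (N - G).det := by
        rw [Matrix.sub_mul, Matrix.one_mul, Matrix.mul_assoc, hN, Matrix.mul_one]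

theorem det_scalar_sub_smigocGlue {B : Matrix (κ ⊕ τ) (κ ⊕ τ) K} {A : Matrix ι ι K}
    {D : Matrix τ τ K} {U : Matrix ι τ K} {Y : Matrix τ ι K} (t : K)
    (hB : IsUnit (scalar κ t - B.toBlocks₁₁).det) (hA : IsUnit (scalar ι t - A).det)
    (hAU : A * U = U * D) (hYU : Y * U = 1) :
    (scalar _ t - smigocGlue B A D U Y).det * (scalar τ t - D).det =
      (scalar ι t - A).det * (scalar _ t - B).det := by
  have := invertibleOfIsUnitDet _ hB
  set Q := ⅟(scalar κ t - B.toBlocks₁₁)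
  have hMU : (scalar ι t - A) * U = U * (scalar τ t - D) := by
    rw [Matrix.sub_mul, Matrix.mul_sub, hAU, scalar_comm t (fun _ => Commute.all _ _)]
  set G := B.toBlocks₂₂ - D + B.toBlocks₂₁ * Q * B.toBlocks₁₂
  have hglue : scalar ι t - (A + U * (B.toBlocks₂₂ - D) * Y) - -(U * B.toBlocks₂₁) * Q *
      -(B.toBlocks₁₂ * Y) = (scalar ι t - A) - U * G * Y := by
    simp only [G, Matrix.neg_mul, Matrix.mul_neg, neg_neg, Matrix.mul_add, Matrix.add_mul,
      Matrix.mul_assoc, Matrix.sub_mul, Matrix.mul_sub]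
    abel
  have hB' : scalar τ t - B.toBlocks₂₂ - -B.toBlocks₂₁ * Q * -B.toBlocks₁₂ =
      (scalar τ t - D) - G := by
    simp only [G, Matrix.neg_mul, Matrix.mul_neg, neg_neg]
    abel
  conv_rhs => rw [← fromBlocks_toBlocks B]
  rw [smigocGlue, scalar_sub_fromBlocks, scalar_sub_fromBlocks, det_fromBlocks₁₁,
    det_fromBlocks₁₁, hglue, hB', mul_assoc, det_sub_mul_mul_mul_det hA hMU hYU]
  ring

theorem charpoly_smigocGlue_mul [Infinite K] {B : Matrix (κ ⊕ τ) (κ ⊕ τ) K} {A : Matrix ι ι K}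
    {D : Matrix τ τ K} {U : Matrix ι τ K} {Y : Matrix τ ι K} (hAU : A * U = U * D)
    (hYU : Y * U = 1) :
    (smigocGlue B A D U Y).charpoly * D.charpoly = A.charpoly * B.charpoly := by
  have hp : B.toBlocks₁₁.charpoly * A.charpoly ≠ 0 :=
    ((charpoly_monic _).mul (charpoly_monic _)).ne_zero
  refine eq_of_infinite_eval_eq _ _
    ((finite_setOfPred_isRoot hp).infinite_compl.mono fun t ht => ?_)
  simp only [Set.mem_compl_iff, Set.mem_ofPred_eq, IsRoot, eval_mul, mul_eq_zero, not_or,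
    eval_charpoly] at ht ⊢
  exact det_scalar_sub_smigocGlue t (isUnit_iff_ne_zero.2 ht.1) (isUnit_iff_ne_zero.2 ht.2) hAU hYU

theorem charpoly_smigocGlue_replicate_mul [Infinite K] (B : Matrix (κ ⊕ Unit) (κ ⊕ Unit) K)
    {A : Matrix ι ι K} {ρ : K} {u y : ι → K} (hAu : A *ᵥ u = ρ • u) (hyu : y ⬝ᵥ u = 1) :
    (smigocGlue B A (scalar Unit ρ) (replicateCol Unit u) (replicateRow Unit y)).charpoly *
      (X - C ρ) = A.charpoly * B.charpoly := by
  have hAU : A * replicateCol Unit u = replicateCol Unit u * scalar Unit ρ := by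
    rw [← replicateCol_mulVec, hAu]
    ext
    simp [mul_comm]
  have hYU : replicateRow Unit y * replicateCol Unit u = 1 := by
    rw [replicateRow_mul_replicateCol, hyu]
    ext
    simp
  have hD : (scalar Unit ρ).charpoly = X - C ρ := by simp [charpoly_diagonal]
  rw [← hD]
  exact charpoly_smigocGlue_mul hAU hYU

end Field

end Matrix

open Matrix

theorem smigoc_glue_general (m n : ℕ) (ρ : ℝ)
    (l : ℕ → ℂ) (μ : ℕ → ℂ)
    (hPerron : ∀ i ∈ Finset.Icc 2 m, ‖l i‖ ≤ ρ)
    (hA : ∃ A : Matrix (Fin m) (Fin m) ℝ, (∀ i j, 0 ≤ A i j) ∧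
      A.charpoly.map (algebraMap ℝ ℂ) =
        (X - C (ρ : ℂ)) * ∏ i ∈ Finset.Icc 2 m, (X - C (l i)))
    (hB : ∃ B : Matrix (Fin n) (Fin n) ℝ, (∀ i j, 0 ≤ B i j) ∧
      B.charpoly.map (algebraMap ℝ ℂ) = (∏ j ∈ Finset.range n, (X - C (μ j))) ∧
      ∃ i : Fin n, ρ ≤ B i i) :
    ∃ M : Matrix (Fin (n + m - 1)) (Fin (n + m - 1)) ℝ, (∀ i j, 0 ≤ M i j) ∧
      M.charpoly.map (algebraMap ℝ ℂ) =
        (∏ j ∈ Finset.range n, (X - C (μ j))) *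
          ∏ i ∈ Finset.Icc 2 m, (X - C (l i)) := by
  obtain ⟨A, hA0, hAcp⟩ := hA
  obtain ⟨B, hB0, hBcp, k, hk⟩ := hB
  obtain ⟨u, hu0, hu, hAu⟩ := exists_nonneg_eigenvector_of_charpoly_eq hA0 hPerron hAcp
  obtain ⟨y, hy0, hyu⟩ := exists_nonneg_dotProduct_eq_one hu0 hu
  -- Move the index `k` of the large diagonal entry of `B` to the last position.
  set e := (Equiv.subtypeNeSumPUnit k).symm
  set G := smigocGlue (reindex e e B) A (scalar Unit ρ) (replicateCol Unit u) (replicateRow Unit y)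
  have hG := charpoly_smigocGlue_replicate_mul (reindex e e B) hAu hyu
  rw [charpoly_reindex] at hG
  have hcard : Fintype.card ({i // i ≠ k} ⊕ Fin m) = n + m - 1 := by
    have := k.pos
    simp only [ne_eq, Fintype.card_sum, Fintype.card_subtype_compl, Fintype.card_fin,
      Fintype.card_unique]
    omega
  set f := Fintype.equivFinOfCardEq hcard
  refine ⟨reindex f f G, fun a b => ?_, ?_⟩
  · refine smigocGlue_nonneg (fun _ _ => hB0 _ _) hA0 (fun _ _ => hu0 _) (fun _ _ => hy0 _) ?_ _ _
    simpa [e] using hk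
  · rw [charpoly_reindex]
    apply mul_left_cancel₀ (X_sub_C_ne_zero (ρ : ℂ))
    have := congrArg (Polynomial.map (algebraMap ℝ ℂ)) hG
    simp only [Polynomial.map_mul, Polynomial.map_sub, map_X, map_C, Complex.coe_algebraMap,
      hAcp, hBcp] at this
    rw [mul_comm, this]
    ring

/-- Šmigoc's gluing theorem. If `(ρ, λ_2, …, λ_m)` is realisable with
Perron eigenvalue `ρ` and `(μ_1, …, μ_n)` is realisable by a nonnegative matrix having a
diagonal entry `≥ ρ`, then `(μ_1, …, μ_n, λ_2, …, λ_m)` is realisable by a nonnegative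
`(n+m−1) × (n+m−1)` matrix. -/
theorem smigoc_glue (m n : ℕ) (hm : 1 ≤ m) (hn : 1 ≤ n) (ρ : ℝ) (hρ : 0 ≤ ρ)
    (l : ℕ → ℂ) (μ : ℕ → ℂ)
    (hPerron : ∀ i ∈ Finset.Icc 2 m, ‖l i‖ ≤ ρ)
    (hA : ∃ A : Matrix (Fin m) (Fin m) ℝ, (∀ i j, 0 ≤ A i j) ∧
      A.charpoly.map (algebraMap ℝ ℂ) =
        (X - C (ρ : ℂ)) * ∏ i ∈ Finset.Icc 2 m, (X - C (l i)))
    (hB : ∃ B : Matrix (Fin n) (Fin n) ℝ, (∀ i j, 0 ≤ B i j) ∧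
      B.charpoly.map (algebraMap ℝ ℂ) = (∏ j ∈ Finset.range n, (X - C (μ j))) ∧
      ∃ i : Fin n, ρ ≤ B i i) :
    ∃ M : Matrix (Fin (n + m - 1)) (Fin (n + m - 1)) ℝ, (∀ i j, 0 ≤ M i j) ∧
      M.charpoly.map (algebraMap ℝ ℂ) =
        (∏ j ∈ Finset.range n, (X - C (μ j))) *
          ∏ i ∈ Finset.Icc 2 m, (X - C (l i)) :=
  smigoc_glue_general m n ρ l μ hPerron hA hB
end
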